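/- arXiv:1701.07617 — 11 statements merged into one kernel-verified Lean document; each statement's English description precedes it below -/
import Mathlib

section
/- Let S : ℕ → ℝ satisfy S(0) = 0 and suppose the limit g* = lim_{n→∞} S(n)/n exists. Let F : [0,∞) → ℝ be the piecewise-linear interpolation of S, i.e. F(u) = S(⌊u⌋) + (u − ⌊u⌋)·(S(⌊u⌋+1) − S(⌊u⌋)). Let (l_n)_{n≥1} be a sequence of positive integers tending to infinity, set R_n = sup_{t∈[0,1]} |F(t·l_n) − t·F(l_n)|, assume R_n > 0 for every n, and define φ_n : [0,1] → ℝ by φ_n(t) = (F(t·l_n) − t·F(l_n))/R_n. If the sequence (φ_n) converges uniformly on [0,1] to a continuous function φ, then the sequence (R_n) is unbounded. -/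
/-- Necessary condition for existence of a limiting curve: if the normalized
deviation functions `φ n` of the linearly interpolated partial sums converge
uniformly on `[0,1]` to a continuous function, then the normalizing
coefficients `R n` are unbounded. -/
theorem limiting_curve_normalizing_unbounded
    (S : ℕ → ℝ) (hS0 : S 0 = 0) (gstar : ℝ)
    (hg : Filter.Tendsto (fun n : ℕ => S n / n) Filter.atTop (nhds gstar))
    (F : ℝ → ℝ)
    (hF : ∀ u : ℝ, 0 ≤ u →
      F u = S ⌊u⌋₊ + (u - ⌊u⌋₊) * (S (⌊u⌋₊ + 1) - S ⌊u⌋₊))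
    (l : ℕ → ℕ) (hlpos : ∀ n, 0 < l n)
    (hltop : Filter.Tendsto l Filter.atTop Filter.atTop)
    (R : ℕ → ℝ)
    (hR : ∀ n, R n = ⨆ t : Set.Icc (0:ℝ) 1, |F (t * l n) - (t : ℝ) * F (l n)|)
    (hRpos : ∀ n, 0 < R n)
    (φ : ℕ → ℝ → ℝ)
    (hφ : ∀ n t, φ n t = (F (t * l n) - t * F (l n)) / R n)
    (ψ : ℝ → ℝ) (hψ : ContinuousOn ψ (Set.Icc (0:ℝ) 1))
    (hconv : TendstoUniformlyOn φ ψ Filter.atTop (Set.Icc (0:ℝ) 1)) :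
    ∀ K : ℝ, ∃ n : ℕ, K < R n := by
  by_contra hcon
  push_neg at hcon
  obtain ⟨K, hK⟩ := hcon
  have hKpos : 0 < K := lt_of_lt_of_le (hRpos 0) (hK 0)
  -- F at natural numbers
  have hFnat : ∀ m : ℕ, F (m : ℝ) = S m := by
    intro m
    rw [hF _ (Nat.cast_nonneg m)]
    simp
  -- uniform continuity of ψ
  have hucont : UniformContinuousOn ψ (Set.Icc (0:ℝ) 1) :=
    isCompact_Icc.uniformContinuousOn_of_continuous hψ
  rw [Metric.uniformContinuousOn_iff] at hucont
  rw [Metric.tendstoUniformlyOn_iff] at hconv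
  have hg2 : Filter.Tendsto (fun n : ℕ => S (l n) / (l n : ℝ))
      Filter.atTop (nhds gstar) := hg.comp hltop
  -- key step: all increments equal gstar
  have hinc : ∀ j : ℕ, S (j + 1) - S j = gstar := by
    intro j
    have habs : ∀ ε : ℝ, 0 < ε → |S (j + 1) - S j - gstar| ≤ ε := by
      intro ε hε
      set ε' : ℝ := ε / (8 * K) with hε'def
      have hε'pos : 0 < ε' := by positivity
      obtain ⟨δ, hδpos, hδ⟩ := hucont ε' hε'pos
      have hev1 : ∀ᶠ n : ℕ in Filter.atTop,
          ∀ x ∈ Set.Icc (0:ℝ) 1, dist (ψ x) (φ n x) < ε' := hconv ε' hε'pos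
      have hev2 : ∀ᶠ n : ℕ in Filter.atTop,
          dist (S (l n) / (l n : ℝ)) gstar < ε / 2 :=
        Metric.tendsto_nhds.mp hg2 (ε / 2) (by positivity)
      have hev3 : ∀ᶠ n : ℕ in Filter.atTop,
          (j + 1) + ⌈1 / δ⌉₊ + 1 ≤ l n :=
        hltop.eventually_ge_atTop _
      obtain ⟨n, h1, h2, h3⟩ := (hev1.and (hev2.and hev3)).exists
      set L : ℝ := ((l n : ℕ) : ℝ) with hLdef
      have hLpos : (0:ℝ) < L := by
        have := hlpos n
        positivity
      have hLbig : (j:ℝ) + 1 + (1 / δ) ≤ L := by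
        have hceil : (1 / δ : ℝ) ≤ ⌈(1 / δ : ℝ)⌉₊ := Nat.le_ceil _
        have : ((j + 1 + ⌈(1/δ:ℝ)⌉₊ + 1 : ℕ) : ℝ) ≤ L := by
          exact_mod_cast Nat.cast_le.mpr h3
        push_cast at this
        linarith
      have hjL : (j:ℝ) + 1 ≤ L := by
        have : 0 < 1 / δ := by positivity
        linarith
      set t1 : ℝ := (j : ℝ) / L with ht1def
      set t2 : ℝ := ((j : ℝ) + 1) / L with ht2def
      have ht1mem : t1 ∈ Set.Icc (0:ℝ) 1 := by
        constructor
        · positivity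
        · rw [div_le_one hLpos]; linarith
      have ht2mem : t2 ∈ Set.Icc (0:ℝ) 1 := by
        constructor
        · positivity
        · rw [div_le_one hLpos]; linarith
      have hdistt : dist t1 t2 < δ := by
        rw [Real.dist_eq, ht1def, ht2def, div_sub_div_same]
        have h1L : |(j:ℝ) - ((j:ℝ) + 1)| = 1 := by
          rw [show (j:ℝ) - ((j:ℝ) + 1) = -1 by ring]; simp
        rw [abs_div, h1L, abs_of_pos hLpos]
        rw [div_lt_iff₀ hLpos]
        have : 1 / δ < L := by
          have : (0:ℝ) ≤ (j:ℝ) + 1 := by positivity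
          linarith
        calc (1:ℝ) = δ * (1 / δ) := by field_simp
        _ < δ * L := by exact mul_lt_mul_of_pos_left this hδpos
      -- evaluate φ n at the grid points
      have hFt1 : F (t1 * L) = S j := by
        rw [ht1def, div_mul_cancel₀ _ hLpos.ne', hFnat]
      have hFt2 : F (t2 * L) = S (j + 1) := by
        rw [ht2def, div_mul_cancel₀ _ hLpos.ne']
        rw [show (j:ℝ) + 1 = ((j + 1 : ℕ) : ℝ) by push_cast; ring, hFnat]
      have hFL : F L = S (l n) := hFnat (l n)
      have hRn : R n ≠ 0 := (hRpos n).ne'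
      have hkey : S (j + 1) - S j - S (l n) / L = R n * (φ n t2 - φ n t1) := by
        rw [hφ n t2, hφ n t1, hFt2, hFt1, hFL, ht1def, ht2def]
        field_simp
        ring
      -- bound |φ n t2 - φ n t1|
      have hb1 : dist (ψ t1) (φ n t1) < ε' := h1 t1 ht1mem
      have hb2 : dist (ψ t2) (φ n t2) < ε' := h1 t2 ht2mem
      have hb3 : dist (ψ t1) (ψ t2) < ε' := hδ t1 ht1mem t2 ht2mem hdistt
      have hφdiff : |φ n t2 - φ n t1| < 3 * ε' := by
        rw [Real.dist_eq] at hb1 hb2 hb3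
        have e : φ n t2 - φ n t1
            = (φ n t2 - ψ t2) + (ψ t1 - ψ t2) * (-1) + (ψ t1 - φ n t1) := by ring
        calc |φ n t2 - φ n t1|
            ≤ |φ n t2 - ψ t2| + |(ψ t1 - ψ t2) * (-1)| + |ψ t1 - φ n t1| := by
              rw [e]; exact (abs_add_le _ _).trans (add_le_add_left (abs_add_le _ _) _)
          _ < ε' + ε' + ε' := by
              rw [abs_sub_comm (φ n t2) (ψ t2), abs_mul]
              simp only [abs_neg, abs_one, mul_one]
              exact add_lt_add (add_lt_add hb2 hb3) hb1
          _ = 3 * ε' := by ring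
      have hbound1 : |S (j + 1) - S j - S (l n) / L| ≤ ε / 2 := by
        rw [hkey, abs_mul, abs_of_pos (hRpos n)]
        have : R n * |φ n t2 - φ n t1| ≤ K * (3 * ε') := by
          apply mul_le_mul (hK n) hφdiff.le (abs_nonneg _) hKpos.le
        calc R n * |φ n t2 - φ n t1| ≤ K * (3 * ε') := this
        _ = 3 * ε / 8 := by rw [hε'def]; field_simp
        _ ≤ ε / 2 := by linarith
      have hbound2 : |S (l n) / L - gstar| < ε / 2 := by
        rw [Real.dist_eq] at h2; exact h2
      calc |S (j + 1) - S j - gstar|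
          = |(S (j + 1) - S j - S (l n) / L) + (S (l n) / L - gstar)| := by ring_nf
        _ ≤ |S (j + 1) - S j - S (l n) / L| + |S (l n) / L - gstar| := abs_add_le _ _
        _ ≤ ε / 2 + ε / 2 := add_le_add hbound1 hbound2.le
        _ = ε := by ring
    have : |S (j + 1) - S j - gstar| ≤ 0 :=
      le_of_forall_pos_le_add fun ε hε => by simpa using habs ε hε
    have := abs_nonpos_iff.mp this
    linarith [this]
  -- hence S is linear
  have hSlin : ∀ j : ℕ, S j = j * gstar := by
    intro j
    induction j with
    | zero => simpa using hS0
    | succ k ih =>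
        have := hinc k
        push_cast
        linarith
  -- hence F is linear
  have hFlin : ∀ u : ℝ, 0 ≤ u → F u = u * gstar := by
    intro u hu
    rw [hF u hu, hSlin, hSlin]
    push_cast
    ring
  -- hence R 0 = 0, contradiction
  have hR0 : R 0 = 0 := by
    rw [hR 0]
    have hnon : Nonempty (Set.Icc (0:ℝ) 1) := ⟨⟨0, by norm_num⟩⟩
    have hfun : (fun t : Set.Icc (0:ℝ) 1 =>
        |F ((t:ℝ) * (l 0 : ℝ)) - (t:ℝ) * F ((l 0 : ℝ))|) = fun _ => (0:ℝ) := by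
      funext t
      have ht0 : (0:ℝ) ≤ (t:ℝ) := t.2.1
      have hl0 : (0:ℝ) ≤ (l 0 : ℝ) := Nat.cast_nonneg _
      rw [hFlin _ (mul_nonneg ht0 hl0), hFlin _ hl0]
      rw [show (t:ℝ) * (l 0:ℝ) * gstar - (t:ℝ) * ((l 0:ℝ) * gstar) = 0 by ring]
      exact abs_zero
    rw [hfun]
    exact ciSup_const
  exact absurd (hRpos 0) (by rw [hR0]; exact lt_irrefl 0)
end

section
/- Let (X, 𝒜, μ) be a probability space, T : X → X an ergodic measure-preserving transformation, and g : X → ℝ an integrable function. Then the following are equivalent: (i) there exists a constant C such that for μ-almost every x ∈ X and every n ∈ ℕ, |∑_{i=0}^{n−1} g(T^i x) − n·∫_X g dμ| ≤ C; (ii) g is cohomologous to a constant in L^∞, i.e. there exist c ∈ ℝ and an essentially bounded measurable function h : X → ℝ such that g = c + h∘T − h holds μ-almost everywhere. -/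
/-!
If `g = c + h ∘ T - h` with `h` bounded, the Birkhoff sums of `g - c` telescope to
`h ∘ T^[n] - h`, hence are bounded by `2 sup |h|`; integrating the cohomology equation against the
invariant measure identifies `c` with `∫ g`. Conversely, if the centered sums
`S n x = birkhoffSum T g n x - n c` are bounded, then `S n (T x) = S (n + 1) x + c - g x`, and
taking `limsup` in `n` shows that `h := -limsup S` solves the cohomology equation.
-/

open MeasureTheory Filter Function

section Coboundary

variable {α : Type*}

theorem birkhoffSum_const_add_coboundary (T : α → α) (h : α → ℝ) (c : ℝ) (n : ℕ) (x : α) :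
    birkhoffSum T (fun y => c + h (T y) - h y) n x = n * c + (h (T^[n] x) - h x) := by
  simp only [birkhoffSum, add_sub_assoc, Finset.sum_add_distrib, Finset.sum_const,
    Finset.card_range, nsmul_eq_mul, ← iterate_succ_apply' T]
  rw [Finset.sum_range_sub (fun i => h (T^[i] x)), iterate_zero_apply]

theorem birkhoffSum_apply_sub_mul (T : α → α) (g : α → ℝ) (c : ℝ) (n : ℕ) (x : α) :
    birkhoffSum T g n (T x) - n * c = birkhoffSum T g (n + 1) x - (n + 1 : ℕ) * c + (c - g x) := by
  rw [birkhoffSum_succ']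
  push_cast
  ring

variable {T : α → α}

theorem limsup_birkhoffSum_apply_sub_mul {g : α → ℝ} {c C : ℝ} {x : α}
    (hC : ∀ n : ℕ, |birkhoffSum T g n x - n * c| ≤ C) :
    limsup (fun n : ℕ => birkhoffSum T g n (T x) - n * c) atTop =
      limsup (fun n : ℕ => birkhoffSum T g n x - n * c) atTop + (c - g x) := by
  set S : ℕ → ℝ := fun n => birkhoffSum T g n x - n * c
  have hbdd : IsBoundedUnder (· ≤ ·) atTop (fun n => S (n + 1)) :=
    isBoundedUnder_of ⟨C, fun n => (abs_le.1 (hC (n + 1))).2⟩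
  have hcobdd : IsCoboundedUnder (· ≤ ·) atTop (fun n => S (n + 1)) :=
    (isBoundedUnder_of ⟨-C, fun n => (abs_le.1 (hC (n + 1))).1⟩).isCoboundedUnder_le
  simp only [birkhoffSum_apply_sub_mul T g c]
  rw [limsup_add_const atTop (fun n => S (n + 1)) _ hbdd hcobdd, limsup_nat_add S 1]

theorem abs_limsup_le_of_forall_abs_le {u : ℕ → ℝ} {C : ℝ} (hC : ∀ n, |u n| ≤ C) :
    |limsup u atTop| ≤ C := by
  have hbdd : IsBoundedUnder (· ≤ ·) atTop u := isBoundedUnder_of ⟨C, fun n => (abs_le.1 (hC n)).2⟩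
  have hbdd' : IsBoundedUnder (· ≥ ·) atTop u :=
    isBoundedUnder_of ⟨-C, fun n => (abs_le.1 (hC n)).1⟩
  exact abs_le.2 ⟨le_limsup_of_frequently_le (.of_forall fun n => (abs_le.1 (hC n)).1) hbdd,
    limsup_le_of_le hbdd'.isCoboundedUnder_le (.of_forall fun n => (abs_le.1 (hC n)).2)⟩

theorem exists_coboundary_of_abs_birkhoffSum_sub_mul_le [MeasurableSpace α] (hT : Measurable T)
    {g : α → ℝ} (hg : Measurable g) (c C : ℝ) :
    ∃ h : α → ℝ, Measurable h ∧ ∀ x, (∀ n : ℕ, |birkhoffSum T g n x - n * c| ≤ C) →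
      |h x| ≤ C ∧ g x = c + h (T x) - h x := by
  have hS : ∀ n : ℕ, Measurable fun x => birkhoffSum T g n x - n * c := fun n =>
    (Finset.measurable_sum _ fun i _ => hg.comp (hT.iterate i)).sub_const _
  refine ⟨fun x => -limsup (fun n : ℕ => birkhoffSum T g n x - n * c) atTop,
    (Measurable.limsup hS).neg, fun x hC => ⟨?_, ?_⟩⟩
  · rw [abs_neg]
    exact abs_limsup_le_of_forall_abs_le hC
  · dsimp only
    rw [limsup_birkhoffSum_apply_sub_mul hC]
    ring

variable [MeasurableSpace α] {μ : Measure α}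

theorem exists_coboundary_of_ae_abs_birkhoffSum_sub_mul_le
    (hT : Measure.QuasiMeasurePreserving T μ μ) {g : α → ℝ} (hg : AEStronglyMeasurable g μ) {c C : ℝ}
    (hC : ∀ᵐ x ∂μ, ∀ n : ℕ, |birkhoffSum T g n x - n * c| ≤ C) :
    ∃ h : α → ℝ, Measurable h ∧ (∀ᵐ x ∂μ, |h x| ≤ C) ∧ ∀ᵐ x ∂μ, g x = c + h (T x) - h x := by
  obtain ⟨h, hh, hcob⟩ := exists_coboundary_of_abs_birkhoffSum_sub_mul_le hT.measurable
    hg.stronglyMeasurable_mk.measurable c C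
  have hsums : ∀ᵐ x ∂μ, ∀ n, birkhoffSum T g n x = birkhoffSum T (hg.mk g) n x :=
    ae_all_iff.2 fun n => hT.birkhoffSum_ae_eq_of_ae_eq hg.ae_eq_mk n
  have hgood : ∀ᵐ x ∂μ, |h x| ≤ C ∧ hg.mk g x = c + h (T x) - h x := by
    filter_upwards [hC, hsums] with x hx hx'
    exact hcob x fun n => hx' n ▸ hx n
  refine ⟨h, hh, hgood.mono fun x hx => hx.1, ?_⟩
  filter_upwards [hgood, hg.ae_eq_mk] with x hx hgx
  rw [hgx]
  exact hx.2

theorem ae_abs_birkhoffSum_sub_mul_le_of_coboundary (hT : Measure.QuasiMeasurePreserving T μ μ)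
    {g h : α → ℝ} {c M : ℝ} (hM : ∀ᵐ x ∂μ, |h x| ≤ M) (heq : ∀ᵐ x ∂μ, g x = c + h (T x) - h x) :
    ∀ᵐ x ∂μ, ∀ n : ℕ, |birkhoffSum T g n x - n * c| ≤ 2 * M := by
  have hsums : ∀ᵐ x ∂μ, ∀ n, birkhoffSum T g n x = birkhoffSum T (fun y => c + h (T y) - h y) n x :=
    ae_all_iff.2 fun n => hT.birkhoffSum_ae_eq_of_ae_eq heq n
  have horbit : ∀ᵐ x ∂μ, ∀ n, |h (T^[n] x)| ≤ M :=
    ae_all_iff.2 fun n => (hT.iterate n).ae hM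
  filter_upwards [hsums, horbit] with x hx hxM n
  rw [hx, birkhoffSum_const_add_coboundary, add_sub_cancel_left]
  calc |h (T^[n] x) - h x| ≤ |h (T^[n] x)| + |h x| := abs_sub _ _
    _ ≤ M + M := add_le_add (hxM n) (hxM 0)
    _ = 2 * M := by ring

theorem integral_eq_of_ae_eq_const_add_coboundary [IsProbabilityMeasure μ]
    (hT : MeasurePreserving T μ μ) {g h : α → ℝ} {c : ℝ} (hh : Integrable h μ)
    (heq : ∀ᵐ x ∂μ, g x = c + h (T x) - h x) :
    ∫ x, g x ∂μ = c := by
  have hhT : ∫ x, h (T x) ∂μ = ∫ x, h x ∂μ := by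
    have hh' : AEStronglyMeasurable h (μ.map T) := by
      rw [hT.map_eq]
      exact hh.aestronglyMeasurable
    rw [← integral_map hT.measurable.aemeasurable hh', hT.map_eq]
  have hhT_int : Integrable (fun x => h (T x)) μ := hT.integrable_comp_of_integrable hh
  have hchT_int : Integrable (fun x => c + h (T x)) μ := (integrable_const c).add hhT_int
  rw [integral_congr_ae heq, integral_sub hchT_int hh,
    integral_add (integrable_const c) hhT_int, hhT, integral_const]
  simp

end Coboundary

/-- For an ergodic measure-preserving transformation `T` of a probability space
and an integrable function `g`, the centered Birkhoff sums are uniformly bounded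
almost everywhere if and only if `g` is cohomologous to a constant in `L^∞`. -/
theorem bounded_birkhoff_sums_iff_cohomologous_to_constant
    {X : Type*} [MeasurableSpace X] (μ : Measure X) [IsProbabilityMeasure μ]
    (T : X → X) (hT : Ergodic T μ)
    (g : X → ℝ) (hg : Integrable g μ) :
    (∃ C : ℝ, ∀ᵐ x ∂μ, ∀ n : ℕ,
        |(∑ i ∈ Finset.range n, g (T^[i] x)) - (n : ℝ) * ∫ y, g y ∂μ| ≤ C) ↔
    (∃ (c : ℝ) (h : X → ℝ), Measurable h ∧ (∃ M : ℝ, ∀ᵐ x ∂μ, |h x| ≤ M) ∧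
        (∀ᵐ x ∂μ, g x = c + h (T x) - h x)) := by
  have hTqmp := hT.toMeasurePreserving.quasiMeasurePreserving
  constructor
  · rintro ⟨C, hC⟩
    obtain ⟨h, hh, hM, heq⟩ := exists_coboundary_of_ae_abs_birkhoffSum_sub_mul_le hTqmp hg.1 hC
    exact ⟨_, h, hh, ⟨C, hM⟩, heq⟩
  · rintro ⟨c, h, hh, ⟨M, hM⟩, heq⟩
    have hc : ∫ y, g y ∂μ = c := integral_eq_of_ae_eq_const_add_coboundary hT.toMeasurePreserving
      (.of_bound hh.aestronglyMeasurable M hM) heq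
    rw [hc]
    exact ⟨2 * M, ae_abs_birkhoffSum_sub_mul_le_of_coboundary hTqmp hM heq⟩
end

section
/- Let p be a prime and N ≥ 1 an integer, and let T : ℤ_p → ℤ_p be the p-adic odometer T(x) = x + 1 on the ring of p-adic integers. For every function g : ℤ/p^Nℤ → ℝ there exist a constant c ∈ ℝ and a bounded function h : ℤ_p → ℝ such that for every x ∈ ℤ_p one has g(x mod p^N) = c + h(x+1) − h(x). -/
/-!
Let `n = p ^ N`. Subtracting the mean `c` of `g` over `ℤ/nℤ` leaves a function `f` of total sum
zero, so its partial sums `F m = ∑_{j < m} f j` are `n`-periodic and descend to a function `H` on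
`ℤ/nℤ` with `H (k + 1) - H k = f k`. Pulling `H` back along the reduction `ℤ_p → ℤ/nℤ`, which
commutes with `x ↦ x + 1`, gives a transfer function taking finitely many values.
-/

open Finset Function

namespace ZMod

variable {M : Type*} [AddCommGroup M] {n : ℕ} [NeZero n]

theorem sum_range_natCast (f : ZMod n → M) : ∑ j ∈ range n, f j = ∑ y, f y := by
  refine sum_bij' (fun j _ => (j : ZMod n)) (fun y _ => y.val) (by simp)
    (fun y _ => mem_range.mpr y.val_lt) (fun j hj => val_cast_of_lt (mem_range.mp hj))
    (fun y _ => natCast_zmod_val y) (fun _ _ => rfl)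

theorem periodic_sum_range_of_sum_eq_zero {f : ZMod n → M} (hf : ∑ y, f y = 0) :
    Periodic (fun m => ∑ j ∈ range m, f j) n := by
  intro m
  have hshift : ∑ j ∈ range n, f ((m + j : ℕ) : ZMod n) = 0 := by
    simp_rw [Nat.cast_add]
    rw [sum_range_natCast (fun y : ZMod n => f (m + y)), ← hf]
    exact Equiv.sum_comp (Equiv.addLeft (m : ZMod n)) f
  simp only [sum_range_add, hshift, add_zero]

theorem exists_add_one_sub_eq_of_sum_eq_zero {f : ZMod n → M} (hf : ∑ y, f y = 0) :
    ∃ H : ZMod n → M, ∀ k, H (k + 1) - H k = f k := by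
  set F : ℕ → M := fun m => ∑ j ∈ range m, f j
  have hF := periodic_sum_range_of_sum_eq_zero hf
  refine ⟨fun k => F k.val, fun k => ?_⟩
  have hval : (k.val + 1) % n = (k + 1).val := by
    rw [← val_natCast, Nat.cast_add, natCast_zmod_val, Nat.cast_one]
  calc F (k + 1).val - F k.val = F (k.val + 1) - F k.val := by
        rw [← hval]
        exact congrArg (· - F k.val) (hF.map_mod_nat _)
    _ = f k := by simp [F, sum_range_succ]

theorem exists_eq_const_add_sub (g : ZMod n → ℝ) :
    ∃ (c : ℝ) (H : ZMod n → ℝ), ∀ k, g k = c + H (k + 1) - H k := by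
  set c := (∑ y, g y) / n
  have hmean : ∑ y, (g y - c) = 0 := by
    rw [sum_sub_distrib, sum_const, card_univ, card, nsmul_eq_mul, mul_div_cancel₀ _ (Nat.cast_ne_zero.mpr (NeZero.ne n)), sub_self]
  obtain ⟨H, hH⟩ := exists_add_one_sub_eq_of_sum_eq_zero hmean
  exact ⟨c, H, fun k => by linarith [hH k]⟩

end ZMod

theorem exists_bounded_cohomologous_const_comp_ringHom {R : Type*} [Ring R] {n : ℕ} [NeZero n]
    (φ : R →+* ZMod n) (g : ZMod n → ℝ) :
    ∃ (c : ℝ) (h : R → ℝ), (∃ M : ℝ, ∀ x, |h x| ≤ M) ∧ ∀ x, g (φ x) = c + h (x + 1) - h x := by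
  obtain ⟨c, H, hH⟩ := ZMod.exists_eq_const_add_sub g
  refine ⟨c, H ∘ φ, ⟨∑ y, |H y|, fun x => ?_⟩, fun x => by simp [hH]⟩
  exact single_le_sum (f := fun y => |H y|) (fun y _ => abs_nonneg _) (mem_univ _)

theorem odometer_cylindric_cohomologous_to_constant_general
    (p : ℕ) [Fact p.Prime] (N : ℕ)
    (g : ZMod (p ^ N) → ℝ) :
    ∃ (c : ℝ) (h : ℤ_[p] → ℝ), (∃ M : ℝ, ∀ x : ℤ_[p], |h x| ≤ M) ∧
      ∀ x : ℤ_[p], g (PadicInt.toZModPow N x) = c + h (x + 1) - h x := by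
  have : NeZero (p ^ N) := ⟨pow_ne_zero N (Fact.out : p.Prime).ne_zero⟩
  exact exists_bounded_cohomologous_const_comp_ringHom (PadicInt.toZModPow N) g

/-- For the `p`-adic odometer `x ↦ x + 1` on `ℤ_p`, every cylindric function of
rank `N` (i.e. a function factoring through `ℤ_p → ℤ/p^Nℤ`) is cohomologous to
a constant, with a bounded transfer function. -/
theorem odometer_cylindric_cohomologous_to_constant
    (p : ℕ) [Fact p.Prime] (N : ℕ) (hN : 1 ≤ N)
    (g : ZMod (p ^ N) → ℝ) :
    ∃ (c : ℝ) (h : ℤ_[p] → ℝ), (∃ M : ℝ, ∀ x : ℤ_[p], |h x| ≤ M) ∧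
      ∀ x : ℤ_[p], g (PadicInt.toZModPow N x) = c + h (x + 1) - h x :=
  odometer_cylindric_cohomologous_to_constant_general p N g
end

section
/- Fix an integer d ≥ 1 and a polynomial p(x) = a_0 + a_1 x + ⋯ + a_d x^d whose coefficients a_0, …, a_d are positive integers, and let C_p(n,k) be the coefficient of x^k in p(x)^n. Then there exist n₁ ∈ ℕ and a constant C₁ > 0, depending only on a_0, …, a_d, such that for all n ≥ n₁ and all k with 0 ≤ k ≤ nd − 1, both C_p(n, k+1) ≤ C₁ · n · C_p(n,k) and C_p(n,k) ≤ C₁ · n · C_p(n,k+1) hold. -/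
/-!
Since `(Pⁿ)' = n Pⁿ⁻¹ P'` and `P' ≤ d M P` coefficientwise (`M` the largest coefficient; this
uses that all coefficients up to the degree are positive), and multiplication by a polynomial
with nonnegative coefficients preserves coefficientwise inequalities, we get
`(k + 1) C(n, k + 1) ≤ n d M C(n, k)`. The reverse inequality is the same bound for the
reciprocal polynomial `X^d P(1/X)`, whose `n`-th power is the reversal of `Pⁿ`.
-/

open Finset

namespace Polynomial

section Semiring

variable {R : Type*} [Semiring R]

theorem reflect_pow {p : R[X]} {N : ℕ} (hp : p.natDegree ≤ N) (n : ℕ) :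
    reflect (n * N) (p ^ n) = reflect N p ^ n := by
  induction n with
  | zero => simp
  | succ n ih =>
    rw [pow_succ, pow_succ, Nat.succ_mul, reflect_mul _ _ (natDegree_pow_le_of_le n hp) hp, ih]

theorem coeff_sum_range_C_mul_X_pow (a : ℕ → R) (d k : ℕ) :
    (∑ i ∈ range (d + 1), C (a i) * X ^ i).coeff k = if k ≤ d then a k else 0 := by
  simp only [finsetSum_coeff, coeff_C_mul_X_pow, sum_ite_eq, mem_range, Nat.lt_succ_iff]

end Semiring

theorem coeff_mul_le_coeff_mul {p q : ℕ[X]} (h : ∀ j, p.coeff j ≤ q.coeff j) (r : ℕ[X])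
    (k : ℕ) : (r * p).coeff k ≤ (r * q).coeff k := by
  simp only [coeff_mul]
  exact sum_le_sum fun x _ => Nat.mul_le_mul_left _ (h _)

section DerivativeBound

variable {P : ℕ[X]} {c : ℕ}

theorem coeff_derivative_pow_le (h : ∀ j, (derivative P).coeff j ≤ c * P.coeff j) (n k : ℕ) :
    (derivative (P ^ n)).coeff k ≤ c * n * (P ^ n).coeff k := by
  cases n with
  | zero => simp
  | succ n =>
    have hmul : (P ^ n * derivative P).coeff k ≤ (P ^ n * (C c * P)).coeff k :=
      coeff_mul_le_coeff_mul (fun j => by simpa only [coeff_C_mul] using h j) _ k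
    rw [derivative_pow_succ, mul_assoc, coeff_C_mul, Nat.cast_id]
    calc (n + 1) * (P ^ n * derivative P).coeff k
        ≤ (n + 1) * (P ^ n * (C c * P)).coeff k := Nat.mul_le_mul_left _ hmul
      _ = c * (n + 1) * (P ^ (n + 1)).coeff k := by
        rw [mul_left_comm, coeff_C_mul, ← pow_succ]; ring

theorem coeff_pow_succ_le_of_derivative_le (h : ∀ j, (derivative P).coeff j ≤ c * P.coeff j)
    (n k : ℕ) : (P ^ n).coeff (k + 1) ≤ c * n * (P ^ n).coeff k :=
  calc (P ^ n).coeff (k + 1) ≤ (P ^ n).coeff (k + 1) * (k + 1) :=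
        Nat.le_mul_of_pos_right _ k.succ_pos
    _ = (derivative (P ^ n)).coeff k := by rw [coeff_derivative]; norm_cast
    _ ≤ c * n * (P ^ n).coeff k := coeff_derivative_pow_le h n k

end DerivativeBound

section PositiveCoefficients

variable {P : ℕ[X]} {d M : ℕ}

theorem coeff_derivative_le (hdeg : P.natDegree ≤ d) (hpos : ∀ j < d, 0 < P.coeff j)
    (hM : ∀ j, P.coeff j ≤ M) (j : ℕ) : (derivative P).coeff j ≤ d * M * P.coeff j := by
  rw [coeff_derivative]
  norm_cast
  by_cases hj : j + 1 ≤ d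
  · calc P.coeff (j + 1) * (j + 1) ≤ M * d := Nat.mul_le_mul (hM _) hj
      _ ≤ d * M * P.coeff j := by rw [mul_comm M]; exact Nat.le_mul_of_pos_right _ (hpos j hj)
  · rw [coeff_eq_zero_of_natDegree_lt (by omega), zero_mul]
    exact Nat.zero_le _

theorem coeff_pow_succ_le (hdeg : P.natDegree ≤ d) (hpos : ∀ j < d, 0 < P.coeff j)
    (hM : ∀ j, P.coeff j ≤ M) (n k : ℕ) :
    (P ^ n).coeff (k + 1) ≤ d * M * n * (P ^ n).coeff k :=
  coeff_pow_succ_le_of_derivative_le (coeff_derivative_le hdeg hpos hM) n k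

theorem coeff_pow_le (hdeg : P.natDegree ≤ d) (hpos : ∀ j ≤ d, 0 < P.coeff j)
    (hM : ∀ j, P.coeff j ≤ M) (n : ℕ) {k : ℕ} (hk : k + 1 ≤ n * d) :
    (P ^ n).coeff k ≤ d * M * n * (P ^ n).coeff (k + 1) := by
  have hdegQ : (reflect d P).natDegree ≤ d := natDegree_reflect_le.trans (max_le le_rfl hdeg)
  have hposQ : ∀ j < d, 0 < (reflect d P).coeff j := fun j hj => by
    rw [coeff_reflect, revAt_le hj.le]
    exact hpos _ (Nat.sub_le d j)
  have hMQ : ∀ j, (reflect d P).coeff j ≤ M := fun j => by rw [coeff_reflect]; exact hM _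
  have key := coeff_pow_succ_le hdegQ hposQ hMQ n (n * d - (k + 1))
  rwa [← reflect_pow hdeg, coeff_reflect, coeff_reflect, revAt_le (by omega), revAt_le (by omega),
    show n * d - (n * d - (k + 1) + 1) = k by omega,
    show n * d - (n * d - (k + 1)) = k + 1 by omega] at key

end PositiveCoefficients

end Polynomial

open Polynomial in
/-- Part 1 of the paper's Lemma 6: the ratio of consecutive generalized
binomial coefficients `C_p(n,k) = [x^k] p(x)^n` in row `n` is at most `C₁·n`
for `n` large enough, with `n₁` and `C₁` depending only on the coefficients
of `p`. -/
theorem generalized_binomial_consecutive_ratio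
    (d : ℕ) (hd : 1 ≤ d) (a : ℕ → ℕ) (ha : ∀ i ≤ d, 0 < a i)
    (P : Polynomial ℕ)
    (hP : P = ∑ i ∈ Finset.range (d + 1), Polynomial.C (a i) * Polynomial.X ^ i) :
    ∃ (n₁ : ℕ) (C₁ : ℝ), 0 < C₁ ∧ ∀ n : ℕ, n₁ ≤ n → ∀ k : ℕ, k + 1 ≤ n * d →
      ((P ^ n).coeff (k + 1) : ℝ) ≤ C₁ * n * ((P ^ n).coeff k : ℝ) ∧
      ((P ^ n).coeff k : ℝ) ≤ C₁ * n * ((P ^ n).coeff (k + 1) : ℝ) := by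
  have hcoeff : ∀ j, P.coeff j = if j ≤ d then a j else 0 := by
    rw [hP]; exact coeff_sum_range_C_mul_X_pow a d
  have hdeg : P.natDegree ≤ d :=
    natDegree_le_iff_coeff_eq_zero.2 fun j hj => by simp [hcoeff, not_le.2 hj]
  have hpos : ∀ j ≤ d, 0 < P.coeff j := fun j hj => by simpa [hcoeff, hj] using ha j hj
  set M := (range (d + 1)).sup a
  have hM : ∀ j, P.coeff j ≤ M := fun j => by
    rw [hcoeff]
    split_ifs with hj
    · exact le_sup (mem_range.2 (Nat.lt_succ_of_le hj))
    · exact Nat.zero_le M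
  have hMpos : 0 < d * M := Nat.mul_pos hd ((hpos 0 d.zero_le).trans_le (hM 0))
  refine ⟨0, ((d * M : ℕ) : ℝ), by exact_mod_cast hMpos, fun n _ k hk => ⟨?_, ?_⟩⟩
  · exact_mod_cast coeff_pow_succ_le hdeg (fun j hj => hpos j hj.le) hM n k
  · exact_mod_cast coeff_pow_le hdeg hpos hM n hk
end

section
/- Fix an integer d ≥ 1 and a polynomial p(x) = a_0 + a_1 x + ⋯ + a_d x^d whose coefficients a_0, …, a_d are positive integers, and let C_p(n,k) be the coefficient of x^k in p(x)^n. Then for every integer n ≥ 1, every i with 1 ≤ i ≤ d, and every k with i ≤ k ≤ nd: n · i · a_i · C_p(n−1, k−i) ≤ k · C_p(n,k); in particular C_p(n−1, k−i) ≤ (1/a_i)·(k/n)·C_p(n,k). -/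
/-- Part 2 of the paper's Lemma 6: for `1 ≤ i ≤ d` and `i ≤ k ≤ nd` one has
`n·i·a_i·C_p(n−1,k−i) ≤ k·C_p(n,k)`, and in particular
`C_p(n−1,k−i) ≤ (1/a_i)·(k/n)·C_p(n,k)`. -/
theorem generalized_binomial_row_estimate
    (d : ℕ) (hd : 1 ≤ d) (a : ℕ → ℕ) (ha : ∀ i ≤ d, 0 < a i)
    (P : Polynomial ℕ)
    (hP : P = ∑ i ∈ Finset.range (d + 1), Polynomial.C (a i) * Polynomial.X ^ i)
    (n : ℕ) (hn : 1 ≤ n) (i : ℕ) (hi1 : 1 ≤ i) (hid : i ≤ d)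
    (k : ℕ) (hik : i ≤ k) (hknd : k ≤ n * d) :
    n * i * a i * (P ^ (n - 1)).coeff (k - i) ≤ k * (P ^ n).coeff k ∧
    ((P ^ (n - 1)).coeff (k - i) : ℝ) ≤
      (1 / (a i : ℝ)) * ((k : ℝ) / (n : ℝ)) * ((P ^ n).coeff k : ℝ) := by
  have hPi : P.coeff i = a i := by
    subst hP
    rw [Polynomial.finset_sum_coeff]
    rw [Finset.sum_eq_single i]
    · simp
    · intro b _ hb
      simp [Polynomial.coeff_X_pow, Ne.symm hb]
    · intro h
      exact absurd (Finset.mem_range.mpr (Nat.lt_succ_of_le hid)) h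
  -- derivative identity
  have hder : k * (P ^ n).coeff k =
      n * ((P ^ (n - 1) * Polynomial.derivative P).coeff (k - 1)) := by
    have h1 : (Polynomial.derivative (P ^ n)).coeff (k - 1) = (P ^ n).coeff k * k := by
      have h := Polynomial.coeff_derivative (P ^ n) (k - 1)
      rw [Nat.cast_id, Nat.sub_add_cancel (le_trans hi1 hik)] at h
      exact h
    have h2 : Polynomial.derivative (P ^ n)
        = Polynomial.C n * P ^ (n - 1) * Polynomial.derivative P :=
      Polynomial.derivative_pow P n
    rw [h2] at h1
    rw [mul_assoc, Polynomial.coeff_C_mul] at h1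
    rw [mul_comm k, ← h1]
  have hterm : i * a i * (P ^ (n - 1)).coeff (k - i) ≤
      (P ^ (n - 1) * Polynomial.derivative P).coeff (k - 1) := by
    rw [Polynomial.coeff_mul]
    have hmem : (k - i, i - 1) ∈ Finset.HasAntidiagonal.antidiagonal (k - 1) := by
      rw [Finset.HasAntidiagonal.mem_antidiagonal]; omega
    have hDi : (Polynomial.derivative P).coeff (i - 1) = i * a i := by
      have h := Polynomial.coeff_derivative P (i - 1)
      rw [Nat.cast_id, Nat.sub_add_cancel hi1] at h
      rw [h, hPi, mul_comm]
    calc i * a i * (P ^ (n - 1)).coeff (k - i)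
        = (P ^ (n - 1)).coeff (k - i) * (Polynomial.derivative P).coeff (i - 1) := by
          rw [hDi]; ring
      _ ≤ _ := Finset.single_le_sum
          (f := fun x => (P ^ (n - 1)).coeff x.1 * (Polynomial.derivative P).coeff x.2)
          (fun x _ => Nat.zero_le _) hmem
  have hmain : n * i * a i * (P ^ (n - 1)).coeff (k - i) ≤ k * (P ^ n).coeff k := by
    rw [hder]
    calc n * i * a i * (P ^ (n - 1)).coeff (k - i)
        = n * (i * a i * (P ^ (n - 1)).coeff (k - i)) := by ring
      _ ≤ n * ((P ^ (n - 1) * Polynomial.derivative P).coeff (k - 1)) :=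
          Nat.mul_le_mul_left _ hterm
  refine ⟨hmain, ?_⟩
  have hai : (0 : ℝ) < a i := by exact_mod_cast ha i hid
  have hnR : (0 : ℝ) < n := by exact_mod_cast hn
  have h2 : n * a i * (P ^ (n - 1)).coeff (k - i) ≤ k * (P ^ n).coeff k := by
    refine le_trans ?_ hmain
    apply Nat.mul_le_mul_right
    calc n * a i = n * 1 * a i := by ring
      _ ≤ n * i * a i := Nat.mul_le_mul_right _ (Nat.mul_le_mul_left _ hi1)
  rw [show (1 / (a i : ℝ)) * ((k : ℝ) / (n : ℝ)) * ((P ^ n).coeff k : ℝ)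
      = ((k : ℝ) * ((P ^ n).coeff k : ℝ)) / ((a i : ℝ) * (n : ℝ)) by
        field_simp, le_div_iff₀ (by positivity)]
  calc ((P ^ (n - 1)).coeff (k - i) : ℝ) * ((a i : ℝ) * (n : ℝ))
      = ((n * a i * (P ^ (n - 1)).coeff (k - i) : ℕ) : ℝ) := by push_cast; ring
    _ ≤ ((k * (P ^ n).coeff k : ℕ) : ℝ) := by exact_mod_cast h2
    _ = (k : ℝ) * ((P ^ n).coeff k : ℝ) := by push_cast; ring
end

section
/- Fix an integer d ≥ 1 and a polynomial p(x) = a_0 + a_1 x + ⋯ + a_d x^d whose coefficients a_0, …, a_d are positive integers, and let C_p(n,k) be the coefficient of x^k in p(x)^n. Then for every integer n ≥ 1, every i with 0 ≤ i ≤ d−1, and every k with i ≤ k ≤ nd: n · (d−i) · a_i · C_p(n−1, k−i) ≤ (nd − k) · C_p(n,k). -/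
/-! Applying the Euler operator `X · d/dX` to `P ^ n` gives
`k · C(n, k) = n · ∑_{u + v = k} u · a_u · C(n - 1, v)`, while `P ^ n = P · P ^ (n - 1)` gives
`nd · C(n, k) = n · ∑_{u + v = k} d · a_u · C(n - 1, v)`. Hence
`(nd - k) · C(n, k) = n · ∑_{u + v = k} (d - u) · a_u · C(n - 1, v)`, a sum of nonnegative terms
(`a_u = 0` for `u > d`) one of which is `n · (d - i) · a_i · C(n - 1, k - i)`. -/

open Polynomial Finset

section CommSemiring

variable {R : Type*} [CommSemiring R]

theorem Polynomial.coeff_X_mul_derivative (f : R[X]) (k : ℕ) :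
    (X * derivative f).coeff k = k * f.coeff k := by
  cases k with
  | zero => simp
  | succ k => rw [coeff_X_mul, coeff_derivative, mul_comm, Nat.cast_succ]

theorem Polynomial.natCast_mul_coeff_pow_eq_sum_antidiagonal (P : R[X]) (n k : ℕ) :
    k * (P ^ n).coeff k
      = n * ∑ x ∈ antidiagonal k, x.1 * P.coeff x.1 * (P ^ (n - 1)).coeff x.2 := by
  have euler : X * derivative (P ^ n) = C (n : R) * ((X * derivative P) * P ^ (n - 1)) := by
    rw [derivative_pow]; ring
  rw [← coeff_X_mul_derivative, euler, coeff_C_mul, coeff_mul]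
  simp only [coeff_X_mul_derivative]

theorem Polynomial.natCast_mul_coeff_pow_eq_natCast_mul_coeff_mul_pow_pred (P : R[X]) (n k : ℕ) :
    n * (P ^ n).coeff k = n * (P * P ^ (n - 1)).coeff k := by
  cases n with
  | zero => simp
  | succ n => rw [pow_succ', Nat.add_sub_cancel]

end CommSemiring

theorem Polynomial.mul_sub_mul_coeff_pow_le (P : ℕ[X]) {d : ℕ} (hP : P.natDegree ≤ d) (n : ℕ)
    {i k : ℕ} (hik : i ≤ k) :
    n * (d - i) * P.coeff i * (P ^ (n - 1)).coeff (k - i) ≤ (n * d - k) * (P ^ n).coeff k := by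
  set Q := P ^ (n - 1)
  set T := ∑ x ∈ antidiagonal k, x.1 * P.coeff x.1 * Q.coeff x.2
  set U := ∑ x ∈ antidiagonal k, (d - x.1) * P.coeff x.1 * Q.coeff x.2
  have hkT : k * (P ^ n).coeff k = n * T := by
    simpa using natCast_mul_coeff_pow_eq_sum_antidiagonal P n k
  have hdT : n * d * (P ^ n).coeff k = n * (T + U) := by
    have hsplit (u : ℕ) : d * P.coeff u = u * P.coeff u + (d - u) * P.coeff u := by
      rcases le_or_gt u d with hu | hu
      · rw [← add_mul, Nat.add_sub_cancel' hu]
      · simp [coeff_eq_zero_of_natDegree_lt (hP.trans_lt hu)]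
    have := natCast_mul_coeff_pow_eq_natCast_mul_coeff_mul_pow_pred P n k
    simp only [Nat.cast_id] at this
    rw [mul_comm n d, mul_assoc, this, coeff_mul, mul_left_comm, mul_sum, ← sum_add_distrib]
    congr 1
    refine sum_congr rfl fun x _ => ?_
    rw [← mul_assoc, hsplit, add_mul]
  have hterm : (d - i) * P.coeff i * Q.coeff (k - i) ≤ U :=
    single_le_sum (f := fun x : ℕ × ℕ => (d - x.1) * P.coeff x.1 * Q.coeff x.2)
      (fun _ _ => Nat.zero_le _) (mem_antidiagonal.2 (Nat.add_sub_cancel' hik) : (i, k - i) ∈ _)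
  calc n * (d - i) * P.coeff i * Q.coeff (k - i)
      ≤ n * U := by
        rw [mul_assoc, mul_assoc, ← mul_assoc (d - i)]; exact Nat.mul_le_mul_left n hterm
    _ = n * (T + U) - n * T := by rw [mul_add, Nat.add_sub_cancel_left]
    _ = (n * d - k) * (P ^ n).coeff k := by rw [Nat.sub_mul, hdT, hkT]

theorem generalized_binomial_row_estimate_symmetric_general
    (d : ℕ) (a : ℕ → ℕ)
    (P : Polynomial ℕ)
    (hP : P = ∑ i ∈ Finset.range (d + 1), Polynomial.C (a i) * Polynomial.X ^ i)
    (n : ℕ) (i : ℕ) (hid : i ≤ d - 1)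
    (k : ℕ) (hik : i ≤ k) :
    n * (d - i) * a i * (P ^ (n - 1)).coeff (k - i) ≤ (n * d - k) * (P ^ n).coeff k := by
  have hcoeff (j : ℕ) : P.coeff j = if j ≤ d then a j else 0 := by
    simp [hP, finsetSum_coeff]
  have hdeg : P.natDegree ≤ d :=
    natDegree_le_iff_coeff_eq_zero.2 fun j hj => by rw [hcoeff, if_neg hj.not_ge]
  have hi : P.coeff i = a i := by rw [hcoeff, if_pos (by omega)]
  simpa [hi] using mul_sub_mul_coeff_pow_le P hdeg n hik

/-- Symmetric counterpart of part 2 of the paper's Lemma 6: for `0 ≤ i ≤ d−1`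
and `i ≤ k ≤ nd` one has `n·(d−i)·a_i·C_p(n−1,k−i) ≤ (nd−k)·C_p(n,k)`. -/
theorem generalized_binomial_row_estimate_symmetric
    (d : ℕ) (hd : 1 ≤ d) (a : ℕ → ℕ) (ha : ∀ i ≤ d, 0 < a i)
    (P : Polynomial ℕ)
    (hP : P = ∑ i ∈ Finset.range (d + 1), Polynomial.C (a i) * Polynomial.X ^ i)
    (n : ℕ) (hn : 1 ≤ n) (i : ℕ) (hid : i ≤ d - 1)
    (k : ℕ) (hik : i ≤ k) (hknd : k ≤ n * d) :
    n * (d - i) * a i * (P ^ (n - 1)).coeff (k - i) ≤ (n * d - k) * (P ^ n).coeff k :=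
  generalized_binomial_row_estimate_symmetric_general d a P hP n i hid k hik
end

section
/- Let d ≥ 1 be an integer and set q* = 1/(d+1). Let t : ℝ → ℝ be differentiable at q* with t(q*) = 1/(d+1), and suppose that for all q in some neighborhood of q* the identity q^d + q^{d−1} t(q) + q^{d−2} t(q)^2 + ⋯ + t(q)^d = q^{d−1} holds. Then t'(q*) = (d−2)/d. -/
/-!
Write `h_d(x, y) = ∑_{i ≤ d} x^(d-i) y^i`. On the diagonal `x = y = a` both partial derivatives of
`h_d` equal `(∑_{i ≤ d} i) a^(d-1) = d(d+1)/2 · a^(d-1)`. Differentiating `h_d(q, t q) = q^(d-1)` at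
`q* = t(q*) = 1/(d+1)` therefore gives `d(d+1)/2 · q*^(d-1) (1 + t') = (d-1) q*^(d-2)`, i.e.
`1 + t' = 2(d-1)/d`.
-/

open Finset

section

variable {𝕜 : Type*} [NontriviallyNormedField 𝕜]

lemma natCast_mul_pow_pred_mul_pow (n m : ℕ) (a : 𝕜) :
    (n : 𝕜) * a ^ (n - 1) * a ^ m = n * a ^ (n + m - 1) := by
  cases n with
  | zero => simp
  | succ n => rw [mul_assoc, ← pow_add]; congr 3; omega

lemma sum_range_sub_natCast_eq_sum_range_natCast (d : ℕ) :
    ∑ i ∈ range (d + 1), ((d - i : ℕ) : 𝕜) = ∑ i ∈ range (d + 1), (i : 𝕜) := by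
  rw [← sum_range_reflect (fun i : ℕ ↦ (i : 𝕜))]
  refine sum_congr rfl fun i _ ↦ ?_
  congr 2

theorem HasDerivAt.sum_pow_sub_mul_pow_of_eq {f g : 𝕜 → 𝕜} {f' g' x : 𝕜} (d : ℕ)
    (hf : HasDerivAt f f' x) (hg : HasDerivAt g g' x) (hfg : f x = g x) :
    HasDerivAt (fun y ↦ ∑ i ∈ range (d + 1), f y ^ (d - i) * g y ^ i)
      ((∑ i ∈ range (d + 1), (i : 𝕜)) * f x ^ (d - 1) * (f' + g')) x := by
  refine (HasDerivAt.fun_sum fun i (_ : i ∈ range (d + 1)) ↦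
    (hf.fun_pow (d - i)).mul (hg.fun_pow i)).congr_deriv ?_
  have hterm : ∀ i ∈ range (d + 1),
      (d - i : ℕ) * f x ^ (d - i - 1) * f' * g x ^ i + f x ^ (d - i) * (i * g x ^ (i - 1) * g')
        = (d - i : ℕ) * f x ^ (d - 1) * f' + i * f x ^ (d - 1) * g' := by
    intro i hi
    have hid : i ≤ d := Nat.lt_succ_iff.mp (mem_range.mp hi)
    rw [← hfg]
    calc _ = (d - i : ℕ) * f x ^ (d - i - 1) * f x ^ i * f' +
          i * f x ^ (i - 1) * f x ^ (d - i) * g' := by ring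
      _ = _ := by
        rw [natCast_mul_pow_pred_mul_pow, natCast_mul_pow_pred_mul_pow, Nat.sub_add_cancel hid,
          Nat.add_sub_cancel' hid]
  rw [sum_congr rfl hterm, sum_add_distrib, ← sum_mul, ← sum_mul, ← sum_mul, ← sum_mul,
    sum_range_sub_natCast_eq_sum_range_natCast]
  ring

end

lemma natCast_sum_range_succ_id_mul_two (d : ℕ) :
    (∑ i ∈ range (d + 1), (i : ℝ)) * 2 = ((d : ℝ) + 1) * d := by
  have h := sum_range_id_mul_two (d + 1)
  rw [Nat.add_sub_cancel] at h
  have hR := congrArg (Nat.cast (R := ℝ)) h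
  push_cast at hR
  linear_combination hR

/-- In the symmetric case `q* = t_{q*} = 1/(d+1)` for `p(x) = 1 + x + ⋯ + x^d`,
the implicit derivative of `t_q` at `q*` equals `(d−2)/d`. -/
theorem implicit_derivative_symmetric_case
    (d : ℕ) (hd : 1 ≤ d) (t : ℝ → ℝ)
    (ht : DifferentiableAt ℝ t (1 / ((d : ℝ) + 1)))
    (ht0 : t (1 / ((d : ℝ) + 1)) = 1 / ((d : ℝ) + 1))
    (heq : ∀ᶠ q in nhds (1 / ((d : ℝ) + 1)),
      ∑ i ∈ Finset.range (d + 1), q ^ (d - i) * t q ^ i = q ^ (d - 1)) :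
    deriv t (1 / ((d : ℝ) + 1)) = ((d : ℝ) - 2) / (d : ℝ) := by
  set q : ℝ := 1 / ((d : ℝ) + 1) with hq
  have hlhs := (hasDerivAt_id q).sum_pow_sub_mul_pow_of_eq d ht.hasDerivAt ht0.symm
  have hrhs := (hasDerivAt_pow (d - 1) q).congr_of_eventuallyEq heq
  have himplicit := hlhs.unique hrhs
  obtain ⟨n, rfl⟩ := Nat.exists_eq_add_of_le' hd
  have hq0 : q ≠ 0 := by positivity
  have hcancel : (∑ i ∈ range (n + 1 + 1), (i : ℝ)) * q * (1 + deriv t q) = n := by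
    apply mul_right_cancel₀ (pow_ne_zero n hq0)
    have hpow : (n : ℝ) * q ^ (n - 1) * q = n * q ^ n := by
      simpa using natCast_mul_pow_pred_mul_pow n 1 q
    simp only [id, Nat.add_sub_cancel] at himplicit
    linear_combination q * himplicit + hpow
  have hgauss : (∑ i ∈ range (n + 1 + 1), (i : ℝ)) * q = (n + 1) / 2 := by
    rw [hq, ← div_eq_mul_one_div, div_eq_div_iff (by positivity) two_ne_zero,
      natCast_sum_range_succ_id_mul_two]
    push_cast; ring
  rw [hgauss] at hcancel
  push_cast
  rw [eq_div_iff (by positivity)]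
  linear_combination 2 * hcancel
end

section
/- Let d ≥ 1 be an integer, let a_0, …, a_d be positive integers, and let q ∈ (0, 1/a_0). Then there exists exactly one t ∈ (0,1) satisfying a_0 q^d + a_1 q^{d−1} t + a_2 q^{d−2} t^2 + ⋯ + a_d t^d = q^{d−1}. Moreover, for this t one has a_0·q + a_1·t + a_2·(t^2/q) + ⋯ + a_d·(t^d/q^{d−1}) = 1, and consequently each of the numbers q, t, t^2/q, …, t^d/q^{d−1} lies in (0,1). -/
section Aux

variable (d : ℕ) (a : ℕ → ℕ) (q : ℝ)

private noncomputable def gfun (t : ℝ) : ℝ :=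
  ∑ i ∈ Finset.range (d + 1), (a i : ℝ) * q ^ (d - i) * t ^ i

private lemma gfun_strict (hq : 0 < q) (ha : ∀ i ≤ d, 0 < a i) (hd : 1 ≤ d)
    {x y : ℝ} (hx : 0 ≤ x) (hxy : x < y) : gfun d a q x < gfun d a q y := by
  unfold gfun
  apply Finset.sum_lt_sum
  · intro i _
    have : x ^ i ≤ y ^ i := pow_le_pow_left₀ hx hxy.le i
    have hc : 0 ≤ (a i : ℝ) * q ^ (d - i) := by positivity
    nlinarith
  · refine ⟨1, Finset.mem_range.2 (by omega), ?_⟩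
    have h1 : (0:ℝ) < (a 1 : ℝ) := by exact_mod_cast ha 1 hd
    have hc : 0 < (a 1 : ℝ) * q ^ (d - 1) := by positivity
    simpa using (mul_lt_mul_of_pos_left (by simpa using hxy) hc)

end Aux

/-- Existence and uniqueness of the parameter `t_q ∈ (0,1)` solving
`a_0 q^d + a_1 q^{d−1} t + ⋯ + a_d t^d = q^{d−1}` for `q ∈ (0, 1/a_0)`;
moreover, the associated weights `q, t, t²/q, …, t^d/q^{d−1}` form a
probability vector with all entries in `(0,1)`. -/
theorem exists_unique_tq_and_probability_vector
    (d : ℕ) (hd : 1 ≤ d) (a : ℕ → ℕ) (ha : ∀ i ≤ d, 0 < a i)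
    (q : ℝ) (hq : q ∈ Set.Ioo (0 : ℝ) (1 / (a 0 : ℝ))) :
    (∃! t : ℝ, t ∈ Set.Ioo (0 : ℝ) 1 ∧
      ∑ i ∈ Finset.range (d + 1), (a i : ℝ) * q ^ (d - i) * t ^ i = q ^ (d - 1)) ∧
    ∀ t : ℝ, t ∈ Set.Ioo (0 : ℝ) 1 →
      (∑ i ∈ Finset.range (d + 1), (a i : ℝ) * q ^ (d - i) * t ^ i = q ^ (d - 1)) →
      (∑ i ∈ Finset.range (d + 1), (a i : ℝ) * (q ^ (1 - (i : ℤ)) * t ^ i) = 1 ∧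
        ∀ i ≤ d, q ^ (1 - (i : ℤ)) * t ^ i ∈ Set.Ioo (0 : ℝ) 1) := by
  obtain ⟨hq0, hq1⟩ := hq
  have ha0 : (0:ℝ) < (a 0 : ℝ) := by exact_mod_cast ha 0 (by omega)
  have hqa : (a 0 : ℝ) * q < 1 := by
    rw [lt_div_iff₀ ha0] at hq1; linarith
  have hqlt1 : q < 1 := by
    have : (1:ℝ) ≤ (a 0 : ℝ) := by exact_mod_cast ha 0 (by omega)
    nlinarith
  have hcont : Continuous (gfun d a q) := by
    unfold gfun; continuity
  have hg0 : gfun d a q 0 < q ^ (d - 1) := by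
    have h0 : gfun d a q 0 = (a 0 : ℝ) * q ^ d := by
      unfold gfun
      rw [Finset.sum_eq_single 0]
      · simp
      · intro i _ hi
        simp [zero_pow hi]
      · simp
    rw [h0]
    have hdd : q ^ d = q * q ^ (d - 1) := by
      rw [← pow_succ']
      congr 1; omega
    have hpos : (0:ℝ) < q ^ (d - 1) := by positivity
    rw [hdd]
    nlinarith
  have hg1 : q ^ (d - 1) < gfun d a q 1 := by
    have h1 : q ^ (d - 1) ≤ 1 := pow_le_one₀ hq0.le hqlt1.le
    have hd1 : (1:ℝ) ≤ (a d : ℝ) := by exact_mod_cast ha d le_rfl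
    have hkey : (fun i => (a i : ℝ) * q ^ (d - i) * (1:ℝ) ^ i) d <
        ∑ i ∈ Finset.range (d + 1), (a i : ℝ) * q ^ (d - i) * (1:ℝ) ^ i := by
      refine Finset.single_lt_sum (f := fun i => (a i : ℝ) * q ^ (d - i) * (1:ℝ) ^ i)
        (i := d) (j := 0) (by omega)
        (Finset.mem_range.2 (by omega)) (Finset.mem_range.2 (by omega)) (by positivity) ?_
      intro k _ _
      positivity
    simp only [Nat.sub_self, pow_zero, one_pow, mul_one] at hkey
    unfold gfun
    simp only [one_pow, mul_one]
    linarith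
  obtain ⟨t, ht, hgt⟩ : ∃ t ∈ Set.Ioo (0:ℝ) 1, gfun d a q t = q ^ (d - 1) := by
    have := intermediate_value_Ioo (zero_le_one) hcont.continuousOn
      (Set.mem_Ioo.2 ⟨hg0, hg1⟩)
    obtain ⟨t, ht, hgt⟩ := this
    exact ⟨t, ht, hgt⟩
  constructor
  · refine ⟨t, ⟨ht, hgt⟩, ?_⟩
    rintro s ⟨hs, hgs'⟩
    have hgs : gfun d a q s = q ^ (d - 1) := hgs'
    rcases lt_trichotomy s t with h | h | h
    · exfalso
      have := gfun_strict d a q hq0 ha hd hs.1.le h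
      rw [hgs, hgt] at this; exact lt_irrefl _ this
    · exact h
    · exfalso
      have := gfun_strict d a q hq0 ha hd ht.1.le h
      rw [hgs, hgt] at this; exact lt_irrefl _ this
  · rintro s ⟨hs0, hs1⟩ hgs
    have hqne : q ≠ 0 := ne_of_gt hq0
    have hqd1 : (0:ℝ) < q ^ (d - 1) := by positivity
    have key : ∀ i ≤ d, q ^ (1 - (i:ℤ)) * s ^ i
        = (((a i : ℝ)) * q ^ (d - i) * s ^ i) / ((a i : ℝ) * q ^ (d - 1)) := by
      intro i hi
      have hai : (0:ℝ) < (a i : ℝ) := by exact_mod_cast ha i hi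
      have e1 : q ^ (d - i) = q ^ ((d:ℤ) - i) := by
        rw [← zpow_natCast]; congr 1; omega
      have e2 : q ^ (d - 1) = q ^ ((d:ℤ) - 1) := by
        rw [← zpow_natCast]; congr 1; omega
      have hz : q ^ (1 - (i:ℤ)) = q ^ ((d:ℤ) - i) / q ^ ((d:ℤ) - 1) := by
        rw [← zpow_sub₀ hqne]
        congr 1; ring
      rw [hz, e1, e2]
      field_simp
    have hsum : ∑ i ∈ Finset.range (d + 1), (a i : ℝ) * (q ^ (1 - (i:ℤ)) * s ^ i) = 1 := by
      have hcongr : ∀ i ∈ Finset.range (d + 1),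
          (a i : ℝ) * (q ^ (1 - (i:ℤ)) * s ^ i)
            = ((a i : ℝ) * q ^ (d - i) * s ^ i) / q ^ (d - 1) := by
        intro i hi
        have hi' : i ≤ d := Nat.lt_succ_iff.1 (Finset.mem_range.1 hi)
        have hai : (a i : ℝ) ≠ 0 := by
          have : (0:ℝ) < (a i : ℝ) := by exact_mod_cast ha i hi'
          linarith
        rw [key i hi']
        field_simp
      rw [Finset.sum_congr rfl hcongr, ← Finset.sum_div, hgs, div_self (ne_of_gt hqd1)]
    refine ⟨hsum, ?_⟩
    intro i hi
    have hai : (0:ℝ) < (a i : ℝ) := by exact_mod_cast ha i hi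
    have hai1 : (1:ℝ) ≤ (a i : ℝ) := by exact_mod_cast ha i hi
    have hzp : (0:ℝ) < q ^ (1 - (i:ℤ)) := zpow_pos hq0 _
    have hwpos : 0 < q ^ (1 - (i:ℤ)) * s ^ i := by positivity
    refine ⟨hwpos, ?_⟩
    obtain ⟨j, hji, hjd⟩ : ∃ j, j ≠ i ∧ j ≤ d := by
      rcases Nat.eq_zero_or_pos i with h | h
      · exact ⟨1, by omega, hd⟩
      · exact ⟨0, by omega, by omega⟩
    have haj : (0:ℝ) < (a j : ℝ) := by exact_mod_cast ha j hjd
    have hzpj : (0:ℝ) < q ^ (1 - (j:ℤ)) := zpow_pos hq0 _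
    have hterm : (fun k => (a k : ℝ) * (q ^ (1 - (k:ℤ)) * s ^ k)) i
        < ∑ k ∈ Finset.range (d + 1), (a k : ℝ) * (q ^ (1 - (k:ℤ)) * s ^ k) := by
      apply Finset.single_lt_sum hji (Finset.mem_range.2 (by omega))
        (Finset.mem_range.2 (by omega))
      · positivity
      · intro k hk _
        have hzk : (0:ℝ) < q ^ (1 - (k:ℤ)) := zpow_pos hq0 _
        positivity
    simp only at hterm
    rw [hsum] at hterm
    nlinarith
end

section
/- Fix an integer d ≥ 1. For a digit sequence ω = (ω_j)_{j≥1} with ω_j ∈ {0,1,…,d}, write σ_j = ω_1 + ⋯ + ω_j and define G_d(ω) = (1/(d+1)) · ∑_{j=1}^∞ (1/(d+1))^{j−1} · ∑_{i=0}^{ω_j−1} ( j − 2(σ_j − ω_j + i)/d ). Then for every digit sequence ω with first digit ω_1 = m (0 ≤ m ≤ d): | G_d(ω) − m(d+1−m)/(d(d+1)) | ≤ 400·d/(d+1)². -/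
/-- The function `𝒯̃_d` of the paper's Section 4, expressed in digit
coordinates: for a digit sequence `ω = (ω_j)_{j≥1}` with digits in `{0,…,d}`,
`G_d(ω) = (1/(d+1)) · ∑_{j=1}^∞ (1/(d+1))^{j−1} ∑_{i=0}^{ω_j−1}
(j − 2(σ_j − ω_j + i)/d)`, where `σ_j = ω_1 + ⋯ + ω_j`. -/
noncomputable def Gd (d : ℕ) (ω : ℕ → ℕ) : ℝ :=
  (1 / ((d : ℝ) + 1)) * ∑' j : ℕ, (1 / ((d : ℝ) + 1)) ^ j *
    ∑ i ∈ Finset.range (ω (j + 1)),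
      (((j : ℝ) + 1) -
        2 * (((∑ t ∈ Finset.Icc 1 (j + 1), ω t : ℕ) : ℝ) - (ω (j + 1) : ℝ) + (i : ℝ)) / (d : ℝ))

private lemma sum_id_real (m : ℕ) : ∑ i ∈ Finset.range m, (i : ℝ) = m * (m - 1) / 2 := by
  induction m with
  | zero => simp
  | succ n ih =>
    rw [Finset.sum_range_succ, ih]
    push_cast
    ring

/-- Uniform bound: for every digit sequence `ω` with digits in `{0,…,d}` and
first digit `m`, the value `G_d(ω)` differs from `m(d+1−m)/(d(d+1))` by at
most `400·d/(d+1)²`. -/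
theorem Gd_uniform_bound
    (d : ℕ) (hd : 1 ≤ d) (m : ℕ) (hm : m ≤ d)
    (ω : ℕ → ℕ) (hω : ∀ j, 1 ≤ j → ω j ≤ d) (hω1 : ω 1 = m) :
    |Gd d ω - (m : ℝ) * ((d : ℝ) + 1 - (m : ℝ)) / ((d : ℝ) * ((d : ℝ) + 1))| ≤
      400 * (d : ℝ) / ((d : ℝ) + 1) ^ 2 := by
  have hd1 : (1 : ℝ) ≤ (d : ℝ) := by exact_mod_cast hd
  have hdpos : (0 : ℝ) < (d : ℝ) := by linarith
  set q : ℝ := 1 / ((d : ℝ) + 1) with hqdef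
  have hq0 : 0 < q := by positivity
  have hq1 : q < 1 := by
    rw [hqdef, div_lt_one (by linarith)]; linarith
  have hqn : ‖q‖ < 1 := by rwa [Real.norm_eq_abs, abs_of_pos hq0]
  -- the inner sum
  set A : ℕ → ℝ := fun j => ∑ i ∈ Finset.range (ω (j + 1)),
      (((j : ℝ) + 1) -
        2 * (((∑ t ∈ Finset.Icc 1 (j + 1), ω t : ℕ) : ℝ) - (ω (j + 1) : ℝ) + (i : ℝ)) / (d : ℝ))
    with hAdef
  have hGd : Gd d ω = q * ∑' j : ℕ, q ^ j * A j := rfl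
  -- bound on A
  have hA : ∀ j : ℕ, |A j| ≤ (d : ℝ) * ((j : ℝ) + 1) := by
    intro j
    have hωd : ω (j + 1) ≤ d := hω (j + 1) (Nat.le_add_left 1 j)
    have hσn : ∑ t ∈ Finset.Icc 1 (j + 1), ω t ≤ (j + 1) * d := by
      calc ∑ t ∈ Finset.Icc 1 (j + 1), ω t ≤ ∑ t ∈ Finset.Icc 1 (j + 1), d :=
          Finset.sum_le_sum (fun t ht => hω t (Finset.mem_Icc.mp ht).1)
        _ = (j + 1) * d := by
          rw [Finset.sum_const, Nat.card_Icc, smul_eq_mul, Nat.add_sub_cancel]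
    have hσub : ((∑ t ∈ Finset.Icc 1 (j + 1), ω t : ℕ) : ℝ) ≤ ((j : ℝ) + 1) * (d : ℝ) := by
      exact_mod_cast hσn
    have hstep : ∀ i ∈ Finset.range (ω (j + 1)),
        |(((j : ℝ) + 1) -
          2 * (((∑ t ∈ Finset.Icc 1 (j + 1), ω t : ℕ) : ℝ) - (ω (j + 1) : ℝ) + (i : ℝ)) / (d : ℝ))|
          ≤ (j : ℝ) + 1 := by
      intro i hi
      have hi' : i < ω (j + 1) := Finset.mem_range.mp hi
      have hireal : (i : ℝ) < (ω (j + 1) : ℝ) := by exact_mod_cast hi'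
      have hinn : (0 : ℝ) ≤ (i : ℝ) := Nat.cast_nonneg i
      have hσω : (ω (j + 1) : ℝ) ≤ ((∑ t ∈ Finset.Icc 1 (j + 1), ω t : ℕ) : ℝ) := by
        have : ω (j + 1) ≤ ∑ t ∈ Finset.Icc 1 (j + 1), ω t :=
          Finset.single_le_sum (fun t _ => Nat.zero_le _)
            (Finset.mem_Icc.mpr ⟨Nat.le_add_left 1 j, le_refl _⟩)
        exact_mod_cast this
      have hy0 : (0 : ℝ) ≤ ((∑ t ∈ Finset.Icc 1 (j + 1), ω t : ℕ) : ℝ) - (ω (j + 1) : ℝ) + (i : ℝ) := by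
        linarith
      have hy1 : ((∑ t ∈ Finset.Icc 1 (j + 1), ω t : ℕ) : ℝ) - (ω (j + 1) : ℝ) + (i : ℝ)
          ≤ ((j : ℝ) + 1) * (d : ℝ) := by linarith
      have hdiv0 : (0 : ℝ) ≤ 2 * (((∑ t ∈ Finset.Icc 1 (j + 1), ω t : ℕ) : ℝ) - (ω (j + 1) : ℝ) + (i : ℝ)) / (d : ℝ) :=
        div_nonneg (by linarith) hdpos.le
      have hdiv1 : 2 * (((∑ t ∈ Finset.Icc 1 (j + 1), ω t : ℕ) : ℝ) - (ω (j + 1) : ℝ) + (i : ℝ)) / (d : ℝ)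
          ≤ 2 * ((j : ℝ) + 1) := by
        rw [div_le_iff₀ hdpos]
        nlinarith
      rw [abs_le]
      constructor <;> linarith
    calc |A j| ≤ ∑ i ∈ Finset.range (ω (j + 1)), ((j : ℝ) + 1) :=
        (Finset.abs_sum_le_sum_abs _ _).trans (Finset.sum_le_sum hstep)
      _ = (ω (j + 1) : ℝ) * ((j : ℝ) + 1) := by
        rw [Finset.sum_const, Finset.card_range, nsmul_eq_mul]
      _ ≤ (d : ℝ) * ((j : ℝ) + 1) := by
        have h1 : (ω (j + 1) : ℝ) ≤ (d : ℝ) := by exact_mod_cast hωd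
        have h2 : (0 : ℝ) ≤ (j : ℝ) + 1 := by positivity
        nlinarith
  -- summability
  have hsum1 : Summable (fun j : ℕ => ((j : ℝ) + 1) * q ^ j) := by
    have h1 : Summable (fun j : ℕ => (j : ℝ) * q ^ j) := by
      have := summable_pow_mul_geometric_of_norm_lt_one 1 hqn
      simpa using this
    have h2 : Summable (fun j : ℕ => q ^ j) := summable_geometric_of_lt_one hq0.le hq1
    have := h1.add h2
    convert this using 2 with j
    ring
  have hsumf : Summable (fun j : ℕ => q ^ j * A j) := by
    apply Summable.of_norm
    have hb : ∀ j : ℕ, ‖q ^ j * A j‖ ≤ (d : ℝ) * (((j : ℝ) + 1) * q ^ j) := by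
      intro j
      rw [Real.norm_eq_abs, abs_mul, abs_pow, abs_of_pos hq0]
      calc q ^ j * |A j| ≤ q ^ j * ((d : ℝ) * ((j : ℝ) + 1)) :=
          mul_le_mul_of_nonneg_left (hA j) (by positivity)
        _ = (d : ℝ) * (((j : ℝ) + 1) * q ^ j) := by ring
    exact Summable.of_nonneg_of_le (fun j => norm_nonneg _) hb (hsum1.mul_left _)
  -- split off the first term
  have hsplit : ∑' j : ℕ, q ^ j * A j = A 0 + ∑' j : ℕ, q ^ (j + 1) * A (j + 1) := by
    rw [Summable.tsum_eq_zero_add hsumf]; simp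
  -- value of A 0
  have hA0 : A 0 = (m : ℝ) * ((d : ℝ) + 1 - (m : ℝ)) / (d : ℝ) := by
    have hIcc : Finset.Icc 1 1 = {1} := rfl
    rw [hAdef]
    simp only [Nat.zero_add, hIcc, Finset.sum_singleton, hω1]
    rw [Finset.sum_sub_distrib, Finset.sum_const, Finset.card_range]
    have : ∑ i ∈ Finset.range m, 2 * ((m : ℝ) - (m : ℝ) + (i : ℝ)) / (d : ℝ)
        = (2 / (d : ℝ)) * ∑ i ∈ Finset.range m, (i : ℝ) := by
      rw [Finset.mul_sum]
      apply Finset.sum_congr rfl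
      intro i _
      ring
    rw [this, sum_id_real]
    push_cast
    field_simp
    ring
  have htarget : q * A 0 = (m : ℝ) * ((d : ℝ) + 1 - (m : ℝ)) / ((d : ℝ) * ((d : ℝ) + 1)) := by
    rw [hA0, hqdef]
    field_simp
  -- tail bound
  have htail : |∑' j : ℕ, q ^ (j + 1) * A (j + 1)| ≤ 2 * (d : ℝ) * q * (1 / (1 - q) ^ 2) := by
    have hb : ∀ j : ℕ, |q ^ (j + 1) * A (j + 1)| ≤ 2 * (d : ℝ) * q * (((j : ℝ) + 1) * q ^ j) := by
      intro j
      rw [abs_mul, abs_pow, abs_of_pos hq0]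
      have hjn : (0 : ℝ) ≤ (j : ℝ) := Nat.cast_nonneg j
      have h1 : |A (j + 1)| ≤ (d : ℝ) * (((j : ℝ) + 1) + 1) := by
        have := hA (j + 1); push_cast at this ⊢; linarith
      have h2 : |A (j + 1)| ≤ 2 * (d : ℝ) * ((j : ℝ) + 1) := by nlinarith
      calc q ^ (j + 1) * |A (j + 1)|
          ≤ q ^ (j + 1) * (2 * (d : ℝ) * ((j : ℝ) + 1)) :=
            mul_le_mul_of_nonneg_left h2 (by positivity)
        _ = 2 * (d : ℝ) * q * (((j : ℝ) + 1) * q ^ j) := by rw [pow_succ]; ring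
    have habs : Summable (fun j : ℕ => |q ^ (j + 1) * A (j + 1)|) := by
      apply Summable.of_nonneg_of_le (fun j => abs_nonneg _) hb
      exact hsum1.mul_left _
    have habs' : Summable (fun j : ℕ => ‖q ^ (j + 1) * A (j + 1)‖) := by
      simp only [Real.norm_eq_abs]; exact habs
    calc |∑' j : ℕ, q ^ (j + 1) * A (j + 1)|
        ≤ ∑' j : ℕ, |q ^ (j + 1) * A (j + 1)| := by
          have := norm_tsum_le_tsum_norm (f := fun j : ℕ => q ^ (j+1) * A (j+1)) habs'
          simp only [Real.norm_eq_abs] at this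
          exact this
      _ ≤ ∑' j : ℕ, 2 * (d : ℝ) * q * (((j : ℝ) + 1) * q ^ j) :=
        Summable.tsum_le_tsum hb habs (hsum1.mul_left _)
      _ = 2 * (d : ℝ) * q * ∑' j : ℕ, ((j : ℝ) + 1) * q ^ j := by
        rw [tsum_mul_left]
      _ = 2 * (d : ℝ) * q * (1 / (1 - q) ^ 2) := by
        congr 1
        have h1 : ∑' j : ℕ, (j : ℝ) * q ^ j = q / (1 - q) ^ 2 :=
          tsum_coe_mul_geometric_of_norm_lt_one hqn
        have h2 : ∑' j : ℕ, q ^ j = (1 - q)⁻¹ := tsum_geometric_of_lt_one hq0.le hq1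
        have hs1 : Summable (fun j : ℕ => (j : ℝ) * q ^ j) := by
          have := summable_pow_mul_geometric_of_norm_lt_one 1 hqn
          simpa using this
        have hs2 : Summable (fun j : ℕ => q ^ j) := summable_geometric_of_lt_one hq0.le hq1
        have heq : ∀ j : ℕ, ((j : ℝ) + 1) * q ^ j = (j : ℝ) * q ^ j + q ^ j := fun j => by ring
        rw [tsum_congr heq, Summable.tsum_add hs1 hs2, h1, h2]
        have h1q : (0 : ℝ) < 1 - q := by linarith
        field_simp
        ring
  -- put it together
  have hqA : (1 - q) = (d : ℝ) / ((d : ℝ) + 1) := by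
    rw [hqdef]; field_simp; ring
  have key : Gd d ω - (m : ℝ) * ((d : ℝ) + 1 - (m : ℝ)) / ((d : ℝ) * ((d : ℝ) + 1))
      = q * ∑' j : ℕ, q ^ (j + 1) * A (j + 1) := by
    rw [hGd, hsplit, ← htarget]; ring
  rw [key, abs_mul, abs_of_pos hq0]
  calc q * |∑' j : ℕ, q ^ (j + 1) * A (j + 1)| ≤ q * (2 * (d : ℝ) * q * (1 / (1 - q) ^ 2)) :=
      mul_le_mul_of_nonneg_left htail hq0.le
    _ = 2 / (d : ℝ) := by
      rw [hqA, hqdef]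
      field_simp
    _ ≤ 400 * (d : ℝ) / ((d : ℝ) + 1) ^ 2 := by
      rw [div_le_div_iff₀ hdpos (by positivity)]
      nlinarith
end

section
/- Fix a real number a ∈ [0,1]. For each integer d ≥ 1 let ω^{(d)} = (ω^{(d)}_j)_{j≥1} be any digit sequence with entries in {0,1,…,d} whose first digit is ω^{(d)}_1 = ⌊a·d⌋, and let G_d(ω^{(d)}) = (1/(d+1)) · ∑_{j=1}^∞ (1/(d+1))^{j−1} · ∑_{i=0}^{ω^{(d)}_j−1} ( j − 2(σ_j − ω^{(d)}_j + i)/d ), where σ_j = ω^{(d)}_1 + ⋯ + ω^{(d)}_j. Then lim_{d→∞} G_d(ω^{(d)}) = a(1−a). In particular, lim_{d→∞} ⌊a·d⌋·(d+1−⌊a·d⌋)/(d(d+1)) = a(1−a). -/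
/-!
The `j = 0` term of `G_d(ω)` is exactly `ω₁ (d + 1 − ω₁) / (d (d + 1))`. The `j`-th inner sum
has at most `d` summands, each of absolute value at most `j + 1`, and it carries the weight
`(d + 1)^{-(j+1)}`; so the terms with `j ≥ 1` add up to `O(1/d)`. With `ω₁ = ⌊a d⌋` the first
term tends to `a (1 − a)` because `⌊a d⌋ / d → a`.
-/

open Filter Finset Topology

theorem sum_range_natCast_mul_two {R : Type*} [CommRing R] (n : ℕ) :
    (∑ i ∈ range n, (i : R)) * 2 = n * (n - 1) := by
  induction n with
  | zero => simp
  | succ n ih => rw [sum_range_succ, add_mul, ih]; push_cast; ring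

theorem abs_tsum_geometric_mul_sub_zero_le {x C : ℝ} (hx0 : 0 ≤ x) (hx1 : x < 1) {c : ℕ → ℝ}
    (hc : ∀ j, |c j| ≤ C * (j + 1)) :
    |∑' j, x ^ j * c j - c 0| ≤ C * (1 / (1 - x) ^ 2 - 1) := by
  have hg : HasSum (fun j : ℕ => C * ((j + 1) * x ^ j)) (C * (1 / (1 - x) ^ 2)) := by
    have := (hasSum_choose_mul_geometric_of_norm_lt_one 1
      (by rwa [Real.norm_eq_abs, abs_of_nonneg hx0])).mul_left C
    simpa using this
  have hbound : ∀ j, ‖x ^ j * c j‖ ≤ C * ((j + 1) * x ^ j) := fun j => by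
    rw [norm_mul, norm_pow, Real.norm_eq_abs, Real.norm_eq_abs, abs_of_nonneg hx0]
    nlinarith [hc j, pow_nonneg hx0 j]
  rw [(hg.summable.of_norm_bounded hbound).tsum_eq_zero_add, pow_zero, one_mul,
    add_sub_cancel_left]
  have htail := tsum_of_norm_bounded ((hasSum_nat_add_iff' 1).mpr hg) fun j => hbound (j + 1)
  simpa [mul_sub] using htail

section Blocks

variable (d : ℕ) (ω : ℕ → ℕ)

/-- The inner sum of `Gd` over the digit `ω (j + 1)`: index `j` here is the paper's `j + 1`. -/
noncomputable def GdBlock (j : ℕ) : ℝ :=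
  ∑ i ∈ range (ω (j + 1)),
    (((j : ℝ) + 1) - 2 * (((∑ t ∈ Icc 1 (j + 1), ω t : ℕ) : ℝ) - (ω (j + 1) : ℝ) + (i : ℝ)) / d)

theorem Gd_eq_tsum_GdBlock :
    Gd d ω = 1 / ((d : ℝ) + 1) * ∑' j, (1 / ((d : ℝ) + 1)) ^ j * GdBlock d ω j :=
  rfl

theorem GdBlock_zero : GdBlock d ω 0 = ω 1 - ω 1 * (ω 1 - 1) / d := by
  have hgauss := sum_range_natCast_mul_two (R := ℝ) (ω 1)
  simp only [GdBlock, zero_add, Icc_self, sum_singleton, Nat.cast_zero, sub_self]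
  rw [sum_sub_distrib, sum_const, card_range, nsmul_one, ← sum_div, ← mul_sum]
  linear_combination (-1 / (d : ℝ)) * hgauss

variable {d ω}

theorem abs_GdBlock_le (hω : ∀ j, 1 ≤ j → ω j ≤ d) (j : ℕ) :
    |GdBlock d ω j| ≤ d * (j + 1) := by
  set σ := ∑ t ∈ Icc 1 (j + 1), ω t
  have hσ_le : σ ≤ (j + 1) * d := by
    simpa using sum_le_card_nsmul _ _ d fun t ht => hω t (mem_Icc.1 ht).1
  have hle_σ : ω (j + 1) ≤ σ :=
    single_le_sum (fun t _ => Nat.zero_le (ω t)) (mem_Icc.2 ⟨le_add_self, le_rfl⟩)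
  have hlast : ω (j + 1) ≤ d := hω (j + 1) le_add_self
  have hsummand : ∀ i ∈ range (ω (j + 1)),
      |((j : ℝ) + 1) - 2 * ((σ : ℝ) - ω (j + 1) + i) / d| ≤ j + 1 := by
    intro i hi
    have hi : i < ω (j + 1) := mem_range.1 hi
    have hd : (0 : ℝ) < d := by exact_mod_cast Nat.zero_lt_of_lt (hi.trans_le hlast)
    have hc0 : (0 : ℝ) ≤ (σ : ℝ) - ω (j + 1) + i := by
      have : (ω (j + 1) : ℝ) ≤ σ := by exact_mod_cast hle_σ
      positivity
    have hc1 : (σ : ℝ) - ω (j + 1) + i ≤ (j + 1) * d := by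
      have : (σ : ℝ) ≤ (j + 1) * d := by exact_mod_cast hσ_le
      have : (i : ℝ) ≤ ω (j + 1) := by exact_mod_cast hi.le
      linarith
    have h2c : 2 * ((σ : ℝ) - ω (j + 1) + i) / d ≤ 2 * (j + 1) := by
      rw [div_le_iff₀ hd]; linarith
    have h2c_nonneg : 0 ≤ 2 * ((σ : ℝ) - ω (j + 1) + i) / d := by positivity
    rw [abs_le]
    constructor <;> linarith
  calc |GdBlock d ω j| ≤ ∑ _i ∈ range (ω (j + 1)), ((j : ℝ) + 1) :=
        (abs_sum_le_sum_abs _ _).trans (sum_le_sum hsummand)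
    _ = ω (j + 1) * (j + 1) := by rw [sum_const, card_range, nsmul_eq_mul]
    _ ≤ d * (j + 1) := by gcongr

theorem abs_Gd_sub_le (hd : 1 ≤ d) (hω : ∀ j, 1 ≤ j → ω j ≤ d) :
    |Gd d ω - ω 1 * (d + 1 - ω 1) / (d * (d + 1))| ≤ 3 / (d + 1) := by
  have hd : (1 : ℝ) ≤ d := by exact_mod_cast hd
  have hd0 : (d : ℝ) ≠ 0 := by positivity
  set x : ℝ := 1 / (d + 1) with hx
  have hx0 : 0 < x := by positivity
  have hx1 : x < 1 := by rw [hx, div_lt_one (by positivity)]; linarith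
  have hfirst : (ω 1 : ℝ) * (d + 1 - ω 1) / (d * (d + 1)) = x * GdBlock d ω 0 := by
    rw [GdBlock_zero, hx]; field_simp; ring
  have htail := abs_tsum_geometric_mul_sub_zero_le hx0.le hx1 (abs_GdBlock_le hω)
  calc |Gd d ω - ω 1 * (d + 1 - ω 1) / (d * (d + 1))|
      = x * |∑' j, x ^ j * GdBlock d ω j - GdBlock d ω 0| := by
        rw [Gd_eq_tsum_GdBlock, hfirst, ← mul_sub, abs_mul, abs_of_pos hx0]
    _ ≤ x * (d * (1 / (1 - x) ^ 2 - 1)) := by gcongr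
    _ = (2 * d + 1) / (d * (d + 1)) := by
        rw [show 1 - x = d / (d + 1) by rw [hx]; field_simp; ring, hx]; field_simp; ring
    _ ≤ 3 / (d + 1) := by rw [div_le_div_iff₀ (by positivity) (by positivity)]; nlinarith

end Blocks

theorem tendsto_floor_mul_parabola {a : ℝ} (ha : 0 ≤ a) :
    Tendsto (fun d : ℕ => (⌊a * d⌋₊ : ℝ) * (d + 1 - ⌊a * d⌋₊) / (d * (d + 1))) atTop
      (𝓝 (a * (1 - a))) := by
  have hr := (tendsto_nat_floor_mul_div_atTop ha).comp tendsto_natCast_atTop_atTop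
  have hlim := hr.mul ((tendsto_const_nhds (x := (1 : ℝ))).sub (hr.mul (tendsto_natCast_div_add_atTop (1 : ℝ))))
  rw [mul_one] at hlim
  refine hlim.congr' ?_
  filter_upwards [eventually_ne_atTop 0] with d hd
  have hd : (d : ℝ) ≠ 0 := by exact_mod_cast hd
  simp only [Function.comp_apply]
  field_simp

/-- The limit of limiting curves: as `d → ∞` the normalized limiting curves
`𝒯̃_d` converge pointwise to the parabola `a ↦ a(1−a)`. -/
theorem Gd_tendsto_parabola
    (a : ℝ) (ha : a ∈ Set.Icc (0 : ℝ) 1)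
    (ω : ℕ → ℕ → ℕ)
    (hω : ∀ d, 1 ≤ d → ∀ j, 1 ≤ j → ω d j ≤ d)
    (hω1 : ∀ d, 1 ≤ d → ω d 1 = ⌊a * (d : ℝ)⌋₊) :
    Filter.Tendsto (fun d : ℕ => Gd d (ω d)) Filter.atTop (nhds (a * (1 - a))) ∧
    Filter.Tendsto
      (fun d : ℕ => (⌊a * (d : ℝ)⌋₊ : ℝ) * ((d : ℝ) + 1 - (⌊a * (d : ℝ)⌋₊ : ℝ)) /
        ((d : ℝ) * ((d : ℝ) + 1)))
      Filter.atTop (nhds (a * (1 - a))) := by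
  have hfirst := tendsto_floor_mul_parabola ha.1
  have hbound : Tendsto (fun d : ℕ => 3 / ((d : ℝ) + 1)) atTop (𝓝 0) := by
    simpa [div_eq_mul_inv] using tendsto_one_div_add_atTop_nhds_zero_nat.const_mul (3 : ℝ)
  refine ⟨hfirst.congr_dist (squeeze_zero' (Eventually.of_forall fun _ => dist_nonneg) ?_ hbound),
    hfirst⟩
  filter_upwards [eventually_ge_atTop 1] with d hd
  rw [dist_comm, Real.dist_eq, ← hω1 d hd]
  exact abs_Gd_sub_le hd (hω d hd)
end

section
/- Let d ≥ 0 be an integer and ν a probability measure on the finite set {0,1,…,d}. Let (X_i)_{i≥1} and (Y_i)_{i≥1} be random variables on a probability space such that the whole family (X_1, Y_1, X_2, Y_2, …) is independent and each X_i and each Y_i has distribution ν. Then almost surely there exist infinitely many n ∈ ℕ with X_1 + X_2 + ⋯ + X_n = Y_1 + Y_2 + ⋯ + Y_n. -/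
/-!
Write `u n` for the probability that the partial sums of `X` and `Y` agree at time `n`, and
`r M` for the probability that they disagree at all times `1, …, M`. The two partial sums at
time `n` are independent, identically distributed and take at most `n d + 1` values, so by
Cauchy–Schwarz `u n ≥ 1 / (n d + 1)` and `∑ u n = ∞`. For `n < M` the events "the sums agree
at time `n` and then disagree for the next `M` steps" are disjoint; by independence of past and
future and shift invariance each has probability `u n * r M`, so `r M * ∑_{n < M} u n ≤ 1` and
`r M → 0`. Hence almost surely the walk restarted at any time `n` meets the diagonal again, and a
last meeting time cannot exist.
-/

open MeasureTheory ProbabilityTheory Finset Filter Topology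

namespace RandomWalkMeeting

section IID

variable {ι Ω β : Type*} [MeasurableSpace Ω] [mβ : MeasurableSpace β]

structure IsIID (f : ι → Ω → β) (ν : Measure β) (μ : Measure Ω) : Prop where
  measurable : ∀ i, Measurable (f i)
  map_eq : ∀ i, μ.map (f i) = ν
  indep : iIndepFun f μ

namespace IsIID

variable {f : ι → Ω → β} {ν : Measure β} {μ : Measure Ω}

lemma precomp {κ : Type*} (h : IsIID f ν μ) {g : κ → ι} (hg : g.Injective) :
    IsIID (fun k ↦ f (g k)) ν μ :=
  ⟨fun k ↦ h.measurable (g k), fun k ↦ h.map_eq (g k), h.indep.precomp hg⟩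

lemma map_eq_infinitePi [IsProbabilityMeasure ν] (h : IsIID f ν μ) :
    μ.map (fun ω i ↦ f i ω) = Measure.infinitePi (fun _ : ι ↦ ν) := by
  rw [h.indep.map_fun_eq_infinitePi_map h.measurable]
  simp_rw [h.map_eq]

end IsIID

omit [MeasurableSpace Ω] in
lemma measurable_of_mem_iSup_comap {f : ι → Ω → β} {S : Set ι} {i : ι} (hi : i ∈ S) :
    Measurable[⨆ j ∈ S, MeasurableSpace.comap (f j) mβ] (f i) :=
  (comap_measurable (f i)).mono (le_iSup₂ (f := fun j _ ↦ MeasurableSpace.comap (f j) mβ) i hi)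
    le_rfl

lemma one_le_card_mul_measureReal_eq [MeasurableSingletonClass β] {μ : Measure Ω}
    [IsProbabilityMeasure μ] {U V : Ω → β} (hU : Measurable U) (hV : Measurable V)
    (hUV : IndepFun U V μ) (hid : IdentDistrib U V μ μ) {s : Finset β} (hs : ∀ ω, U ω ∈ s) :
    1 ≤ #s * μ.real {ω | U ω = V ω} := by
  set p : β → ℝ := fun a ↦ μ.real (U ⁻¹' {a})
  have hsum : ∑ a ∈ s, p a = 1 := by
    have hpre : U ⁻¹' s = Set.univ := Set.eq_univ_of_forall hs
    rw [sum_measureReal_preimage_singleton s fun a _ ↦ hU (measurableSet_singleton a), hpre,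
      probReal_univ]
  have hcollision : ∑ a ∈ s, p a ^ 2 ≤ μ.real {ω | U ω = V ω} :=
    calc ∑ a ∈ s, p a ^ 2 = ∑ a ∈ s, μ.real (U ⁻¹' {a} ∩ V ⁻¹' {a}) := by
          refine sum_congr rfl fun a _ ↦ ?_
          rw [sq, measureReal_def, hUV.measure_inter_preimage_eq_mul _ _
            (measurableSet_singleton a) (measurableSet_singleton a),
            ← hid.measure_mem_eq (measurableSet_singleton a), ENNReal.toReal_mul]
          rfl
      _ = μ.real (⋃ a ∈ s, U ⁻¹' {a} ∩ V ⁻¹' {a}) := by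
          refine (measureReal_biUnion_finset (fun a _ b _ hab ↦ ?_) fun a _ ↦
            (hU (measurableSet_singleton a)).inter (hV (measurableSet_singleton a))).symm
          exact ((Set.disjoint_singleton.2 hab).preimage U).mono Set.inter_subset_left
            Set.inter_subset_left
      _ ≤ μ.real {ω | U ω = V ω} := by
          refine measureReal_mono fun ω hω ↦ ?_
          simp only [Set.mem_iUnion, Set.mem_inter_iff, Set.mem_preimage,
            Set.mem_singleton_iff] at hω
          obtain ⟨a, -, hUa, hVa⟩ := hω
          exact hUa.trans hVa.symm
  calc (1 : ℝ) = (∑ a ∈ s, p a) ^ 2 := by rw [hsum, one_pow]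
    _ ≤ #s * ∑ a ∈ s, p a ^ 2 := sq_sum_le_card_mul_sum_sq
    _ ≤ #s * μ.real {ω | U ω = V ω} := by gcongr

end IID

section Walk

variable {Ω : Type*} {d : ℕ}

/-- With `X i = f (.inl i)` and `Y i = f (.inr i)`: the partial sums of `X` and `Y` agree at
time `n`. -/
def meets (f : ℕ ⊕ ℕ → Ω → Fin (d + 1)) (n : ℕ) : Set Ω :=
  {ω | ∑ i ∈ range n, (f (.inl i) ω : ℕ) = ∑ i ∈ range n, (f (.inr i) ω : ℕ)}

def avoids (f : ℕ ⊕ ℕ → Ω → Fin (d + 1)) (M : ℕ) : Set Ω :=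
  {ω | ∀ m ∈ Icc 1 M, ω ∉ meets f m}

def shifted {α : Type*} (f : ℕ ⊕ ℕ → α) (n : ℕ) : ℕ ⊕ ℕ → α :=
  fun j ↦ f (Sum.map (n + ·) (n + ·) j)

lemma meets_zero (f : ℕ ⊕ ℕ → Ω → Fin (d + 1)) : meets f 0 = Set.univ := by
  simp [meets]

lemma mem_meets_add_iff {f : ℕ ⊕ ℕ → Ω → Fin (d + 1)} {n m : ℕ} {ω : Ω} (h : ω ∈ meets f n) :
    ω ∈ meets f (n + m) ↔ ω ∈ meets (shifted f n) m := by
  simp only [meets, shifted, Set.mem_ofPred_eq, sum_range_add, Sum.map_inl, Sum.map_inr] at h ⊢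
  omega

lemma pairwiseDisjoint_meets_inter_avoids (f : ℕ ⊕ ℕ → Ω → Fin (d + 1)) (M : ℕ) :
    (range M : Set ℕ).PairwiseDisjoint fun n ↦ meets f n ∩ avoids (shifted f n) M := by
  have key : ∀ n n', n < n' → n' < M →
      Disjoint (meets f n ∩ avoids (shifted f n) M) (meets f n' ∩ avoids (shifted f n') M) := by
    intro n n' hlt hM
    rw [Set.disjoint_left]
    rintro ω ⟨hn, havoid⟩ ⟨hn', -⟩
    obtain ⟨m, rfl⟩ := Nat.exists_eq_add_of_lt hlt
    exact havoid (m + 1) (mem_Icc.2 ⟨by omega, by omega⟩) ((mem_meets_add_iff hn).1 hn')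
  intro n hn n' hn' hne
  simp only [coe_range, Set.mem_Iio] at hn hn'
  rcases hne.lt_or_gt with hlt | hlt
  · exact key n n' hlt hn'
  · exact (key n' n hlt hn).symm

lemma exists_forall_mem_avoids_of_finite {f : ℕ ⊕ ℕ → Ω → Fin (d + 1)} {ω : Ω}
    (hfin : {n | ω ∈ meets f n}.Finite) : ∃ n, ∀ M, ω ∈ avoids (shifted f n) M := by
  obtain ⟨n, hn, hmax⟩ := Set.exists_max_image _ id hfin ⟨0, by simp [meets_zero]⟩
  refine ⟨n, fun M m hm hmeet ↦ ?_⟩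
  have := hmax (n + m) ((mem_meets_add_iff hn).2 hmeet)
  simp only [mem_Icc, id] at hm this
  omega

lemma measurable_sum_val {m : MeasurableSpace Ω} {g : ℕ → Ω → Fin (d + 1)} {n : ℕ}
    (hg : ∀ i < n, Measurable[m] (g i)) : Measurable[m] fun ω ↦ ∑ i ∈ range n, (g i ω : ℕ) :=
  Finset.measurable_sum _ fun i hi ↦ measurable_of_countable (Fin.val : Fin (d + 1) → ℕ) |>.comp
    (hg i (mem_range.1 hi))

lemma measurableSet_meets {m : MeasurableSpace Ω} {f : ℕ ⊕ ℕ → Ω → Fin (d + 1)} {n : ℕ}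
    (hf : ∀ i < n, Measurable[m] (f (.inl i)) ∧ Measurable[m] (f (.inr i))) :
    MeasurableSet[m] (meets f n) :=
  measurableSet_eq_fun (measurable_sum_val fun i hi ↦ (hf i hi).1)
    (measurable_sum_val fun i hi ↦ (hf i hi).2)

lemma measurableSet_avoids {m : MeasurableSpace Ω} {f : ℕ ⊕ ℕ → Ω → Fin (d + 1)}
    (hf : ∀ j, Measurable[m] (f j)) (M : ℕ) : MeasurableSet[m] (avoids f M) := by
  simp only [avoids, Set.ofPred_forall]
  exact .iInter fun _ ↦ .iInter fun _ ↦
    (measurableSet_meets fun i _ ↦ ⟨hf (.inl i), hf (.inr i)⟩).compl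

variable [MeasurableSpace Ω] {f : ℕ ⊕ ℕ → Ω → Fin (d + 1)} {ν : Measure (Fin (d + 1))}
  {μ : Measure Ω}

lemma IsIID.shift (h : IsIID f ν μ) (n : ℕ) : IsIID (shifted f n) ν μ :=
  h.precomp ((add_right_injective n).sumMap (add_right_injective n))

lemma IsIID.measureReal_meets_inter_avoids_shifted (h : IsIID f ν μ) (n M : ℕ) :
    μ.real (meets f n ∩ avoids (shifted f n) M) =
      μ.real (meets f n) * μ.real (avoids (shifted f n) M) := by
  let time : ℕ ⊕ ℕ → ℕ := Sum.elim id id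
  have hindep := indep_iSup_of_disjoint (fun j ↦ (h.measurable j).comap_le) h.indep
    ((Set.Iio_disjoint_Ici le_rfl).preimage time :
      Disjoint (time ⁻¹' Set.Iio n) (time ⁻¹' Set.Ici n))
  rw [measureReal_def, (Indep_iff _ _ μ).1 hindep _ _ ?past ?future, ENNReal.toReal_mul]
  · rfl
  case past =>
    exact measurableSet_meets fun i hi ↦
      ⟨measurable_of_mem_iSup_comap hi, measurable_of_mem_iSup_comap hi⟩
  case future =>
    exact measurableSet_avoids
      (fun j ↦ measurable_of_mem_iSup_comap (by cases j <;> simp [time])) M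

lemma IsIID.measure_avoids_eq_infinitePi [IsProbabilityMeasure ν] (h : IsIID f ν μ) (M : ℕ) :
    μ (avoids f M) = Measure.infinitePi (fun _ ↦ ν) (avoids (fun j w ↦ w j) M) := by
  rw [← h.map_eq_infinitePi, Measure.map_apply (measurable_pi_lambda _ h.measurable)
    (measurableSet_avoids (fun j ↦ measurable_pi_apply j) M)]
  rfl

lemma IsIID.measureReal_avoids_shifted [IsProbabilityMeasure ν] (h : IsIID f ν μ) (n M : ℕ) :
    μ.real (avoids (shifted f n) M) = μ.real (avoids f M) := by
  rw [measureReal_def, measureReal_def, (h.shift n).measure_avoids_eq_infinitePi,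
    h.measure_avoids_eq_infinitePi]

lemma IsIID.one_le_mul_measureReal_meets [IsProbabilityMeasure ν] (h : IsIID f ν μ) (n : ℕ) :
    1 ≤ ((n * d + 1 : ℕ) : ℝ) * μ.real (meets f n) := by
  have := h.indep.isProbabilityMeasure
  let sum : (ℕ → Fin (d + 1)) → ℕ := fun w ↦ ∑ i ∈ range n, (w i : ℕ)
  have hsum : Measurable sum := measurable_sum_val fun i _ ↦ measurable_pi_apply i
  let U : Ω → ℕ := fun ω ↦ sum fun i ↦ f (.inl i) ω
  let V : Ω → ℕ := fun ω ↦ sum fun i ↦ f (.inr i) ω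
  have hU : Measurable U := measurable_sum_val fun i _ ↦ h.measurable _
  have hV : Measurable V := measurable_sum_val fun i _ ↦ h.measurable _
  have hUV : IndepFun U V μ := by
    have hindep := indep_iSup_of_disjoint (fun j ↦ (h.measurable j).comap_le) h.indep
      Set.isCompl_range_inl_range_inr.disjoint
    refine indep_of_indep_of_le_right (indep_of_indep_of_le_left hindep ?_) ?_ <;>
      exact (measurable_sum_val fun i _ ↦
        measurable_of_mem_iSup_comap (Set.mem_range_self i)).comap_le
  have hid : IdentDistrib U V μ μ := by
    have hvec : IdentDistrib (fun ω i ↦ f (.inl i) ω) (fun ω i ↦ f (.inr i) ω) μ μ :=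
      ⟨(measurable_pi_lambda _ fun i ↦ h.measurable _).aemeasurable,
        (measurable_pi_lambda _ fun i ↦ h.measurable _).aemeasurable, by
          rw [(h.precomp Sum.inl_injective).map_eq_infinitePi,
            (h.precomp Sum.inr_injective).map_eq_infinitePi]⟩
    exact hvec.comp hsum
  have hbound : ∀ ω, U ω ∈ range (n * d + 1) := fun ω ↦ by
    show ∑ i ∈ range n, (f (.inl i) ω : ℕ) ∈ _
    have := sum_le_card_nsmul (range n) (fun i ↦ (f (.inl i) ω : ℕ)) d
      fun i _ ↦ Nat.lt_succ_iff.1 (f (.inl i) ω).isLt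
    simp only [card_range, smul_eq_mul] at this
    exact mem_range.2 (by omega)
  have := one_le_card_mul_measureReal_eq hU hV hUV hid hbound
  rwa [card_range] at this

lemma IsIID.tendsto_sum_measureReal_meets [IsProbabilityMeasure ν] (h : IsIID f ν μ) :
    Tendsto (fun M ↦ ∑ n ∈ range M, μ.real (meets f n)) atTop atTop := by
  have hharmonic : ∀ n : ℕ, ((d : ℝ) + 1)⁻¹ * (1 / ((n : ℝ) + 1)) ≤ μ.real (meets f n) := by
    intro n
    have h1 := h.one_le_mul_measureReal_meets n
    push_cast at h1
    calc ((d : ℝ) + 1)⁻¹ * (1 / ((n : ℝ) + 1)) ≤ 1 / ((n : ℝ) * d + 1) := by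
          rw [inv_mul_eq_div, div_div]
          gcongr
          nlinarith [(n.cast_nonneg : (0 : ℝ) ≤ n), (d.cast_nonneg : (0 : ℝ) ≤ d)]
      _ ≤ μ.real (meets f n) := by rwa [div_le_iff₀' (by positivity)]
  refine tendsto_atTop_mono (fun M ↦ sum_le_sum fun n _ ↦ hharmonic n) ?_
  simp_rw [← mul_sum]
  exact Real.tendsto_sum_range_one_div_nat_succ_atTop.const_mul_atTop (by positivity)

lemma IsIID.measureReal_avoids_mul_sum_le_one [IsProbabilityMeasure ν] (h : IsIID f ν μ)
    (M : ℕ) : μ.real (avoids f M) * ∑ n ∈ range M, μ.real (meets f n) ≤ 1 := by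
  have := h.indep.isProbabilityMeasure
  calc μ.real (avoids f M) * ∑ n ∈ range M, μ.real (meets f n)
      = ∑ n ∈ range M, μ.real (meets f n ∩ avoids (shifted f n) M) := by
        rw [mul_sum]
        refine sum_congr rfl fun n _ ↦ ?_
        rw [h.measureReal_meets_inter_avoids_shifted, h.measureReal_avoids_shifted, mul_comm]
    _ = μ.real (⋃ n ∈ range M, meets f n ∩ avoids (shifted f n) M) :=
        (measureReal_biUnion_finset (pairwiseDisjoint_meets_inter_avoids f M) fun n _ ↦
          (measurableSet_meets fun i _ ↦ ⟨h.measurable _, h.measurable _⟩).inter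
            (measurableSet_avoids (h.shift n).measurable M)).symm
    _ ≤ 1 := measureReal_le_one

lemma IsIID.tendsto_measureReal_avoids [IsProbabilityMeasure ν] (h : IsIID f ν μ) :
    Tendsto (fun M ↦ μ.real (avoids f M)) atTop (𝓝 0) := by
  have hsum := h.tendsto_sum_measureReal_meets
  refine tendsto_of_tendsto_of_tendsto_of_le_of_le' tendsto_const_nhds hsum.inv_tendsto_atTop
    (.of_forall fun M ↦ measureReal_nonneg) ?_
  filter_upwards [hsum.eventually_gt_atTop 0] with M hM
  rw [Pi.inv_apply, ← one_div, le_div_iff₀ hM]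
  exact h.measureReal_avoids_mul_sum_le_one M

lemma IsIID.ae_exists_not_mem_avoids_shifted [IsProbabilityMeasure ν] (h : IsIID f ν μ)
    (n : ℕ) : ∀ᵐ ω ∂μ, ∃ M, ω ∉ avoids (shifted f n) M := by
  have := h.indep.isProbabilityMeasure
  simp only [ae_iff, not_exists, not_not]
  refine (measureReal_eq_zero_iff).1 (le_antisymm ?_ measureReal_nonneg)
  refine ge_of_tendsto' h.tendsto_measureReal_avoids fun M ↦ ?_
  rw [← h.measureReal_avoids_shifted n M]
  exact measureReal_mono fun ω hω ↦ hω M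

lemma IsIID.ae_infinite_meets [IsProbabilityMeasure ν] (h : IsIID f ν μ) :
    ∀ᵐ ω ∂μ, {n | ω ∈ meets f n}.Infinite := by
  filter_upwards [ae_all_iff.2 h.ae_exists_not_mem_avoids_shifted] with ω hω
  by_contra hfin
  obtain ⟨n, hn⟩ := exists_forall_mem_avoids_of_finite (Set.not_infinite.1 hfin)
  obtain ⟨M, hM⟩ := hω n
  exact hM (hn M)

end Walk

end RandomWalkMeeting

open MeasureTheory

theorem random_walk_meets_infinitely_often_general
    (d : ℕ) {Ω : Type*} [MeasurableSpace Ω] (μ : Measure Ω)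
    (ν : Measure (Fin (d + 1))) [IsProbabilityMeasure ν]
    (X Y : ℕ → Ω → Fin (d + 1))
    (hX : ∀ i, Measurable (X i)) (hY : ∀ i, Measurable (Y i))
    (hXd : ∀ i, Measure.map (X i) μ = ν) (hYd : ∀ i, Measure.map (Y i) μ = ν)
    (hindep : ProbabilityTheory.iIndepFun
      (Sum.elim X Y) μ) :
    ∀ᵐ ω ∂μ, {n : ℕ | ∑ i ∈ Finset.range n, (X i ω : ℕ) =
      ∑ i ∈ Finset.range n, (Y i ω : ℕ)}.Infinite :=
  RandomWalkMeeting.IsIID.ae_infinite_meets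
    ⟨Sum.forall.2 ⟨hX, hY⟩, Sum.forall.2 ⟨hXd, hYd⟩, hindep⟩

/-- Recurrence of the mean-zero bounded random walk: if `(X_i)` and `(Y_i)` are
jointly independent random variables with values in `{0,…,d}`, all with the
same distribution `ν`, then almost surely the partial sums of the `X_i` and of
the `Y_i` agree at infinitely many times. -/
theorem random_walk_meets_infinitely_often
    (d : ℕ) {Ω : Type*} [MeasurableSpace Ω] (μ : Measure Ω) [IsProbabilityMeasure μ]
    (ν : Measure (Fin (d + 1))) [IsProbabilityMeasure ν]
    (X Y : ℕ → Ω → Fin (d + 1))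
    (hX : ∀ i, Measurable (X i)) (hY : ∀ i, Measurable (Y i))
    (hXd : ∀ i, Measure.map (X i) μ = ν) (hYd : ∀ i, Measure.map (Y i) μ = ν)
    (hindep : ProbabilityTheory.iIndepFun
      (Sum.elim X Y) μ) :
    ∀ᵐ ω ∂μ, {n : ℕ | ∑ i ∈ Finset.range n, (X i ω : ℕ) =
      ∑ i ∈ Finset.range n, (Y i ω : ℕ)}.Infinite :=
  random_walk_meets_infinitely_often_general d μ ν X Y hX hY hXd hYd hindep
end
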